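/- arXiv:2301.12790 — 4 statements merged into one kernel-verified Lean document; each statement's English description precedes it below -/
import Mathlib

section
/- For integers k > φ ≥ 2, the graph B_{k,φ} is a block graph on k vertices whose dissociation number equals φ; that is, B_{k,φ} belongs to Bl(k,φ). -/
namespace SpectralBlock

variable {V : Type*}

open Classical in
/-- The real adjacency matrix of a simple graph. -/
noncomputable def adjMat [Fintype V] (G : SimpleGraph V) : Matrix V V ℝ :=
  Matrix.of fun u v => if G.Adj u v then (1 : ℝ) else 0

/-- The spectral radius of a graph: the largest real eigenvalue of its adjacency matrix. -/
noncomputable def specRad [Fintype V] (G : SimpleGraph V) : ℝ :=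
  sSup {r : ℝ | ∃ x : V → ℝ, x ≠ 0 ∧ (adjMat G).mulVec x = r • x}

/-- A Perron vector of `G`: an entrywise positive eigenvector of the adjacency
matrix for the eigenvalue `specRad G`. -/
def IsPerron [Fintype V] (G : SimpleGraph V) (x : V → ℝ) : Prop :=
  (∀ v, 0 < x v) ∧ (adjMat G).mulVec x = specRad G • x

/-- A dissociation set: a set of vertices inducing a subgraph of maximum degree at most 1. -/
def IsDissoc (G : SimpleGraph V) (D : Set V) : Prop :=
  ∀ v ∈ D, (D ∩ {u | G.Adj v u}).ncard ≤ 1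

/-- The dissociation number: the maximum cardinality of a dissociation set. -/
noncomputable def dissocNum [Fintype V] (G : SimpleGraph V) : ℕ :=
  sSup {n : ℕ | ∃ D : Set V, IsDissoc G D ∧ D.ncard = n}

/-- A maximum dissociation set. -/
def IsMaxDissoc [Fintype V] (G : SimpleGraph V) (D : Set V) : Prop :=
  IsDissoc G D ∧ D.ncard = dissocNum G

/-- A cut vertex of a connected graph: a vertex whose removal disconnects the graph. -/
def IsCutVertex (G : SimpleGraph V) (v : V) : Prop :=
  G.Connected ∧ ¬ ((⊤ : G.Subgraph).deleteVerts {v}).coe.Connected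

/-- A block of a graph, viewed as a set of vertices: a maximal set inducing a
connected subgraph having no cut vertex of its own. -/
def IsBlock (G : SimpleGraph V) (B : Set V) : Prop :=
  (G.induce B).Connected ∧ (∀ v, ¬ IsCutVertex (G.induce B) v) ∧
    ∀ C : Set V, B ⊆ C → (G.induce C).Connected →
      (∀ v, ¬ IsCutVertex (G.induce C) v) → B = C

/-- A pendant block: a block containing at most one cut vertex of the graph. -/
def IsPendantBlock (G : SimpleGraph V) (B : Set V) : Prop :=
  IsBlock G B ∧ {v | v ∈ B ∧ IsCutVertex G v}.Subsingleton

/-- A block graph: a connected graph each of whose blocks is a complete graph. -/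
def IsBlockGraph (G : SimpleGraph V) : Prop :=
  G.Connected ∧ ∀ B : Set V, IsBlock G B → B.Pairwise G.Adj

/-- The class `Bl(k, φ)` of block graphs on `k` vertices with dissociation number `φ`. -/
def memBl (k φ : ℕ) (G : SimpleGraph (Fin k)) : Prop :=
  IsBlockGraph G ∧ dissocNum G = φ

/-- `G` has maximal spectral radius in the class `Bl(k, φ)`. -/
def MaxSpecIn (k φ : ℕ) (G : SimpleGraph (Fin k)) : Prop :=
  memBl k φ G ∧ ∀ H : SimpleGraph (Fin k), memBl k φ H → specRad H ≤ specRad G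

/-- The extremal block graph `B_{k,φ}` on `Fin k`, with central cut vertex `0`:
all blocks share the vertex `0`; the vertices `1, …, φ-2` form the small pendant
blocks (triangles, together with one pendant edge when `φ` is odd) and the
vertices `φ-1, …, k-1` together with `0` form the big block `K_{k-φ+2}`. -/
def blockGraphB (k φ : ℕ) : SimpleGraph (Fin k) where
  Adj a b := a ≠ b ∧ (a.val = 0 ∨ b.val = 0 ∨
    (φ - 1 ≤ a.val ∧ φ - 1 ≤ b.val) ∨
    (a.val < φ - 1 ∧ b.val < φ - 1 ∧
      (a.val + (φ + 1) % 2) / 2 = (b.val + (φ + 1) % 2) / 2))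
  symm := by
    constructor
    rintro a b ⟨hab, h⟩
    refine ⟨hab.symm, ?_⟩
    rcases h with h | h | ⟨h1, h2⟩ | ⟨h1, h2, h3⟩
    · exact Or.inr (Or.inl h)
    · exact Or.inl h
    · exact Or.inr (Or.inr (Or.inl ⟨h2, h1⟩))
    · exact Or.inr (Or.inr (Or.inr ⟨h2, h1, h3.symm⟩))
  loopless := ⟨fun a h => h.1 rfl⟩

lemma reach_inv {W : Type*} {H : SimpleGraph W} {g : W → ℕ}
    (h : ∀ u v, H.Adj u v → g u = g v) {a b : W} (hr : H.Reachable a b) : g a = g b := by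
  obtain ⟨w⟩ := hr
  induction w with
  | nil => rfl
  | cons h' _ ih => exact (h _ _ h').trans ih

lemma subsingleton_ncard_le_one {α : Type*} {s : Set α} (h : s.Subsingleton) : s.ncard ≤ 1 := by
  rcases s.eq_empty_or_nonempty with rfl | ⟨a, ha⟩
  · simp
  · calc s.ncard ≤ ({a} : Set α).ncard :=
        Set.ncard_le_ncard (fun x hx => h hx ha) (Set.finite_singleton a)
      _ = 1 := Set.ncard_singleton a

lemma adj_iff {k φ : ℕ} (a b : Fin k) : (blockGraphB k φ).Adj a b ↔ (a ≠ b ∧ (a.val = 0 ∨ b.val = 0 ∨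
    (φ - 1 ≤ a.val ∧ φ - 1 ≤ b.val) ∨
    (a.val < φ - 1 ∧ b.val < φ - 1 ∧
      (a.val + (φ + 1) % 2) / 2 = (b.val + (φ + 1) % 2) / 2))) := Iff.rfl

/-- For `k > φ ≥ 2`, the graph `B_{k,φ}` is a block graph on `k` vertices with
dissociation number `φ`, i.e. it belongs to `Bl(k,φ)`. -/
theorem blockGraphB_memBl (k φ : ℕ) (hφ : 2 ≤ φ) (hk : φ < k) :
    memBl k φ (blockGraphB k φ) := by
  haveI : NeZero k := ⟨by omega⟩
  set G := blockGraphB k φ with hG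
  have hval0 : ∀ v : Fin k, v.val = 0 → v = 0 := fun v hv => Fin.ext (by simpa using hv)
  -- the "index" function separating the blocks (away from the center 0)
  set f : Fin k → ℕ := fun v => if φ - 1 ≤ v.val then 0 else (v.val + (φ + 1) % 2) / 2 + 1
    with hf
  have hfadj : ∀ u v : Fin k, u.val ≠ 0 → v.val ≠ 0 → G.Adj u v → f u = f v := by
    intro u v hu hv huv
    rw [adj_iff] at huv
    obtain ⟨-, h⟩ := huv
    simp only [hf]
    split_ifs <;> omega
  have hconnG : G.Connected := by
    rw [SimpleGraph.connected_iff]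
    refine ⟨fun u v => ?_, ⟨0⟩⟩
    have key : ∀ w : Fin k, G.Reachable w 0 := by
      intro w
      by_cases hw : w = 0
      · exact hw ▸ SimpleGraph.Reachable.refl _
      · exact SimpleGraph.Adj.reachable ⟨hw, Or.inr (Or.inl (Fin.val_zero k))⟩
    exact (key u).trans (key v).symm
  refine ⟨⟨hconnG, ?_⟩, ?_⟩
  · -- every block is a clique
    intro B hB a haB b hbB hab
    by_contra hnadj
    have ha0 : a.val ≠ 0 := fun h => hnadj ⟨hab, Or.inl h⟩
    have hb0 : b.val ≠ 0 := fun h => hnadj ⟨hab, Or.inr (Or.inl h)⟩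
    have habv : a.val ≠ b.val := fun h => hab (Fin.ext h)
    have hnadj' : ¬ (a.val = 0 ∨ b.val = 0 ∨
        (φ - 1 ≤ a.val ∧ φ - 1 ≤ b.val) ∨
        (a.val < φ - 1 ∧ b.val < φ - 1 ∧
          (a.val + (φ + 1) % 2) / 2 = (b.val + (φ + 1) % 2) / 2)) :=
      fun h => hnadj ⟨hab, h⟩
    have hfab : f a ≠ f b := by
      simp only [hf]
      split_ifs <;> omega
    obtain ⟨hconn, hnocut, -⟩ := hB
    by_cases h0 : (0 : Fin k) ∈ B
    · refine hnocut ⟨0, h0⟩ ⟨hconn, fun hcon => ?_⟩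
      have hav : (⟨a, haB⟩ : ↥B) ∈ ((⊤ : (G.induce B).Subgraph).deleteVerts {⟨0, h0⟩}).verts := by
        simp only [SimpleGraph.Subgraph.deleteVerts_verts, SimpleGraph.Subgraph.verts_top,
          Set.mem_diff, Set.mem_univ, true_and, Set.mem_singleton_iff]
        intro h
        exact ha0 (by simpa using congrArg (fun x => (x : ↥B).val.val) h)
      have hbv : (⟨b, hbB⟩ : ↥B) ∈ ((⊤ : (G.induce B).Subgraph).deleteVerts {⟨0, h0⟩}).verts := by
        simp only [SimpleGraph.Subgraph.deleteVerts_verts, SimpleGraph.Subgraph.verts_top,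
          Set.mem_diff, Set.mem_univ, true_and, Set.mem_singleton_iff]
        intro h
        exact hb0 (by simpa using congrArg (fun x => (x : ↥B).val.val) h)
      have hr := hcon.preconnected ⟨_, hav⟩ ⟨_, hbv⟩
      have := reach_inv (g := fun x => f x.val.val) (fun u v huv => ?_) hr
      · exact hfab this
      · have huv' := huv
        rw [SimpleGraph.Subgraph.coe_adj, SimpleGraph.Subgraph.deleteVerts_adj] at huv'
        simp only [SimpleGraph.Subgraph.verts_top, Set.mem_univ, true_and,
          Set.mem_singleton_iff, SimpleGraph.Subgraph.top_adj] at huv'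
        obtain ⟨hu1, hu2, hadj⟩ := huv'
        have hadj' : G.Adj u.val.val v.val.val := hadj
        refine hfadj _ _ (fun h => hu1 ?_) (fun h => hu2 ?_) hadj'
        · exact Subtype.ext (Fin.ext h)
        · exact Subtype.ext (Fin.ext h)
    · have hr := hconn.preconnected ⟨a, haB⟩ ⟨b, hbB⟩
      have := reach_inv (g := fun x : ↥B => f x.val) (fun u v huv => ?_) hr
      · exact hfab this
      · have huv' : G.Adj u.val v.val := huv
        refine hfadj _ _ (fun h => h0 ?_) (fun h => h0 ?_) huv'
        · rw [← hval0 u.val h]; exact u.property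
        · rw [← hval0 v.val h]; exact v.property
  · -- dissociation number
    have hub : ∀ D : Set (Fin k), IsDissoc G D → D.ncard ≤ φ := by
      intro D hD
      by_cases h0 : (0 : Fin k) ∈ D
      · have h1 := hD 0 h0
        have hsub : D ⊆ insert (0 : Fin k) (D ∩ {u | G.Adj 0 u}) := by
          intro v hv
          by_cases hv0 : v = 0
          · exact hv0 ▸ Set.mem_insert _ _
          · exact Set.mem_insert_of_mem _ ⟨hv, Ne.symm hv0, Or.inl (Fin.val_zero k)⟩
        calc D.ncard ≤ (insert (0 : Fin k) (D ∩ {u | G.Adj 0 u})).ncard :=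
              Set.ncard_le_ncard hsub (Set.toFinite _)
          _ ≤ (D ∩ {u | G.Adj 0 u}).ncard + 1 := Set.ncard_insert_le _ _
          _ ≤ φ := by omega
      · have hsub : D ⊆ {v : Fin k | 0 < v.val ∧ v.val < φ - 1} ∪
            (D ∩ {v : Fin k | φ - 1 ≤ v.val}) := by
          intro v hv
          rcases lt_or_ge v.val (φ - 1) with h | h
          · exact Or.inl ⟨Nat.pos_of_ne_zero (fun hz => h0 (hval0 v hz ▸ hv)), h⟩
          · exact Or.inr ⟨hv, h⟩
        have hS : ({v : Fin k | 0 < v.val ∧ v.val < φ - 1}).ncard ≤ φ - 2 := by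
          have := Set.ncard_le_ncard_of_injOn Fin.val
            (s := {v : Fin k | 0 < v.val ∧ v.val < φ - 1}) (t := Set.Ioo 0 (φ - 1))
            (fun a ha => ha) (fun a _ b _ h => Fin.ext h) (Set.toFinite _)
          rwa [← Finset.coe_Ioo, Set.ncard_coe_finset, Nat.card_Ioo, show φ - 1 - 0 - 1 = φ - 2 by omega] at this
        have hB2 : (D ∩ {v : Fin k | φ - 1 ≤ v.val}).ncard ≤ 2 := by
          rcases (D ∩ {v : Fin k | φ - 1 ≤ v.val}).eq_empty_or_nonempty with he | ⟨a, haD, haB⟩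
          · rw [he]; simp
          · have h1 := hD a haD
            have hsub2 : D ∩ {v : Fin k | φ - 1 ≤ v.val} ⊆ insert a (D ∩ {u | G.Adj a u}) := by
              rintro v ⟨hvD, hvB⟩
              by_cases hva : v = a
              · exact hva ▸ Set.mem_insert _ _
              · exact Set.mem_insert_of_mem _ ⟨hvD, Ne.symm hva, Or.inr (Or.inr (Or.inl ⟨haB, hvB⟩))⟩
            calc (D ∩ {v : Fin k | φ - 1 ≤ v.val}).ncard
                ≤ (insert a (D ∩ {u | G.Adj a u})).ncard :=
                  Set.ncard_le_ncard hsub2 (Set.toFinite _)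
              _ ≤ (D ∩ {u | G.Adj a u}).ncard + 1 := Set.ncard_insert_le _ _
              _ ≤ 2 := by omega
        calc D.ncard ≤ ({v : Fin k | 0 < v.val ∧ v.val < φ - 1} ∪
              (D ∩ {v : Fin k | φ - 1 ≤ v.val})).ncard :=
              Set.ncard_le_ncard hsub (Set.toFinite _)
          _ ≤ ({v : Fin k | 0 < v.val ∧ v.val < φ - 1}).ncard
              + (D ∩ {v : Fin k | φ - 1 ≤ v.val}).ncard := Set.ncard_union_le _ _
          _ ≤ (φ - 2) + 2 := add_le_add hS hB2
          _ = φ := by omega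
    -- the explicit maximum dissociation set
    set Dex : Set (Fin k) := {v : Fin k | 0 < v.val ∧ v.val ≤ φ} with hDex
    have hDexcard : Dex.ncard = φ := by
      have himg : Fin.val '' Dex = Set.Ioc 0 φ := by
        ext n
        constructor
        · rintro ⟨v, ⟨h1, h2⟩, rfl⟩; exact ⟨h1, h2⟩
        · rintro ⟨h1, h2⟩
          exact ⟨⟨n, by omega⟩, ⟨h1, h2⟩, rfl⟩
      have := Set.ncard_image_of_injOn (f := Fin.val) (s := Dex) (fun a _ b _ h => Fin.ext h)
      rw [himg, ← Finset.coe_Ioc, Set.ncard_coe_finset, Nat.card_Ioc] at this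
      omega
    have hDexdis : IsDissoc G Dex := by
      intro v hv
      apply subsingleton_ncard_le_one
      rintro u1 ⟨hu1D, hu1a⟩ u2 ⟨hu2D, hu2a⟩
      rw [Set.mem_setOf_eq, adj_iff] at hu1a hu2a
      obtain ⟨hne1, h1⟩ := hu1a
      obtain ⟨hne2, h2⟩ := hu2a
      have hne1' : v.val ≠ u1.val := fun h => hne1 (Fin.ext h)
      have hne2' : v.val ≠ u2.val := fun h => hne2 (Fin.ext h)
      obtain ⟨hv1, hv2⟩ := hv
      obtain ⟨hu11, hu12⟩ := hu1D
      obtain ⟨hu21, hu22⟩ := hu2D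
      exact Fin.ext (by omega)
    have hmem : φ ∈ {n : ℕ | ∃ D : Set (Fin k), IsDissoc G D ∧ D.ncard = n} :=
      ⟨Dex, hDexdis, hDexcard⟩
    have hbdd : ∀ n ∈ {n : ℕ | ∃ D : Set (Fin k), IsDissoc G D ∧ D.ncard = n}, n ≤ φ := by
      rintro n ⟨D, hD, rfl⟩; exact hub D hD
    exact le_antisymm (csSup_le ⟨φ, hmem⟩ hbdd) (le_csSup ⟨φ, hbdd⟩ hmem)

end SpectralBlock
end

section
/- Let G be a block graph in Bl(k,φ) and let D be a maximum dissociation set of G. If G has a block B whose vertex set is disjoint from D, then G does not have maximal spectral radius in Bl(k,φ); that is, there exists a block graph G' in Bl(k,φ) with ρ(G) < ρ(G'). -/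
namespace SpectralBlock

variable {V : Type*}

section Spectral

open Matrix

set_option linter.unusedSectionVars false

variable [Fintype V] [DecidableEq V] [Nonempty V] (G : SimpleGraph V)

open Classical in
lemma adjMat_apply (u v : V) : adjMat G u v = if G.Adj u v then (1:ℝ) else 0 := rfl

lemma adjMat_nonneg (u v : V) : 0 ≤ adjMat G u v := by
  rw [adjMat_apply]; split <;> norm_num

lemma adjMat_of_adj {u v : V} (h : G.Adj u v) : adjMat G u v = 1 := by
  rw [adjMat_apply, if_pos h]

lemma adjMat_herm : (adjMat G).IsHermitian := by
  ext u v
  simp only [Matrix.conjTranspose_apply, adjMat_apply, starRingEnd_apply, star_trivial]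
  by_cases h : G.Adj u v
  · rw [if_pos h.symm, if_pos h]
  · rw [if_neg (fun h' => h h'.symm), if_neg h]

noncomputable def lam : ℝ :=
  Finset.univ.sup' Finset.univ_nonempty (adjMat_herm G).eigenvalues

noncomputable def eigB := (adjMat_herm G).eigenvectorBasis
noncomputable def eigV := (adjMat_herm G).eigenvalues
noncomputable def bf (j : V) : V → ℝ := ⇑(eigB G j)
noncomputable def co (x : V → ℝ) (j : V) : ℝ := (eigB G).repr (WithLp.toLp 2 x) j

lemma mulVec_bf (j : V) : (adjMat G).mulVec (bf G j) = eigV G j • bf G j :=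
  (adjMat_herm G).mulVec_eigenvectorBasis j

lemma repr_eq_dot (x : V → ℝ) (j : V) : co G x j = bf G j ⬝ᵥ x := by
  rw [co, OrthonormalBasis.repr_apply_apply]
  simp [PiLp.inner_apply, RCLike.inner_apply, dotProduct, bf, eigB, mul_comm]

lemma euclid_sum_apply {ι : Type*} (s : Finset ι) (f : ι → EuclideanSpace ℝ V) (v : V) :
    (∑ i ∈ s, f i) v = ∑ i ∈ s, f i v := by
  classical
  induction s using Finset.induction with
  | empty => simp [PiLp.zero_apply]
  | insert _ _ h ih =>
    rw [Finset.sum_insert h, Finset.sum_insert h, PiLp.add_apply, ih]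

lemma sum_repr_fun (x : V → ℝ) : x = ∑ j, co G x j • bf G j := by
  have h := (eigB G).sum_repr (WithLp.toLp 2 x)
  funext v
  rw [Finset.sum_apply]
  calc x v = (∑ i, (eigB G).repr (WithLp.toLp 2 x) i • eigB G i : EuclideanSpace ℝ V) v :=
      (congrArg (fun y : EuclideanSpace ℝ V => y v) h).symm
    _ = ∑ i, ((eigB G).repr (WithLp.toLp 2 x) i • eigB G i : EuclideanSpace ℝ V) v := euclid_sum_apply _ _ v
    _ = ∑ j, (co G x j • bf G j) v := by
        refine Finset.sum_congr rfl fun j _ => ?_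
        rw [PiLp.smul_apply]
        rfl

lemma mulVec_expand (x : V → ℝ) :
    (adjMat G).mulVec x = ∑ j, (co G x j * eigV G j) • bf G j := by
  conv_lhs => rw [sum_repr_fun G x]
  rw [show (adjMat G).mulVec (∑ j, co G x j • bf G j)
      = ∑ j, (adjMat G).mulVec (co G x j • bf G j) from
    map_sum (adjMat G).mulVecLin _ _]
  refine Finset.sum_congr rfl fun j _ => ?_
  rw [Matrix.mulVec_smul, mulVec_bf, smul_smul]

lemma dot_sum_smul (x : V → ℝ) (a : V → ℝ) (f : V → V → ℝ) :
    x ⬝ᵥ (∑ j, a j • f j) = ∑ j, a j * (f j ⬝ᵥ x) := by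
  simp only [dotProduct, Finset.sum_apply, Pi.smul_apply, smul_eq_mul, Finset.mul_sum]
  rw [Finset.sum_comm]
  refine Finset.sum_congr rfl fun j _ => Finset.sum_congr rfl fun v _ => by ring

lemma dot_self_eq (x : V → ℝ) : x ⬝ᵥ x = ∑ j, (co G x j)^2 := by
  nth_rewrite 2 [sum_repr_fun G x]
  rw [dot_sum_smul]
  refine Finset.sum_congr rfl fun j _ => ?_
  rw [← repr_eq_dot, sq]

lemma dot_mulVec_eq (x : V → ℝ) :
    x ⬝ᵥ (adjMat G).mulVec x = ∑ j, eigV G j * (co G x j)^2 := by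
  rw [mulVec_expand, dot_sum_smul]
  refine Finset.sum_congr rfl fun j _ => ?_
  rw [← repr_eq_dot]
  ring

lemma eigV_le_lam (j : V) : eigV G j ≤ lam G := Finset.le_sup' _ (Finset.mem_univ j)

lemma rayleigh_le (x : V → ℝ) :
    x ⬝ᵥ (adjMat G).mulVec x ≤ lam G * (x ⬝ᵥ x) := by
  rw [dot_mulVec_eq, dot_self_eq, Finset.mul_sum]
  refine Finset.sum_le_sum fun j _ => ?_
  have h1 : eigV G j ≤ lam G := eigV_le_lam G j
  nlinarith [sq_nonneg (co G x j)]

lemma dot_self_pos {x : V → ℝ} (hx : x ≠ 0) : 0 < x ⬝ᵥ x := by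
  have h : ∃ v, x v ≠ 0 := by
    by_contra h; push_neg at h; exact hx (funext h)
  obtain ⟨v, hv⟩ := h
  have : (0:ℝ) < x v * x v := mul_self_pos.mpr hv
  exact Finset.sum_pos' (fun i _ => mul_self_nonneg _) ⟨v, Finset.mem_univ v, this⟩

lemma bf_ne_zero (j : V) : bf G j ≠ 0 := by
  intro h0
  have hne := (eigB G).orthonormal.ne_zero j
  apply hne
  apply PiLp.ext
  intro v
  exact congrFun h0 v

lemma lam_mem : lam G ∈ {r : ℝ | ∃ x : V → ℝ, x ≠ 0 ∧ (adjMat G).mulVec x = r • x} := by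
  obtain ⟨i₀, -, hi₀⟩ := Finset.exists_mem_eq_sup' (Finset.univ_nonempty (α := V))
    (adjMat_herm G).eigenvalues
  exact ⟨bf G i₀, bf_ne_zero G i₀, by rw [mulVec_bf, eigV, lam, hi₀]⟩

lemma eig_le_lam : ∀ r ∈ {r : ℝ | ∃ x : V → ℝ, x ≠ 0 ∧ (adjMat G).mulVec x = r • x}, r ≤ lam G := by
  rintro r ⟨x, hx, hex⟩
  have h1 : x ⬝ᵥ (adjMat G).mulVec x = r * (x ⬝ᵥ x) := by
    rw [hex, dotProduct_smul, smul_eq_mul]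
  have h2 := rayleigh_le G x
  rw [h1] at h2
  exact le_of_mul_le_mul_right (by linarith) (dot_self_pos hx)

lemma specRad_eq_lam : specRad G = lam G :=
  le_antisymm (csSup_le ⟨lam G, lam_mem G⟩ (eig_le_lam G))
    (le_csSup ⟨lam G, eig_le_lam G⟩ (lam_mem G))

lemma perron_exists :
    ∃ z : V → ℝ, (∀ v, 0 ≤ z v) ∧ z ≠ 0 ∧ (adjMat G).mulVec z = specRad G • z := by
  classical
  rw [specRad_eq_lam]
  obtain ⟨i₀, -, hi₀⟩ := Finset.exists_mem_eq_sup' (Finset.univ_nonempty (α := V))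
    (adjMat_herm G).eigenvalues
  set u : V → ℝ := bf G i₀ with hu
  refine ⟨fun v => |u v|, fun v => abs_nonneg _, ?_, ?_⟩
  · intro h0
    apply bf_ne_zero G i₀
    funext v
    have := congrFun h0 v
    simpa [abs_eq_zero] using this
  · set z : V → ℝ := fun v => |u v| with hz
    have hzz : z ⬝ᵥ z = u ⬝ᵥ u := by
      refine Finset.sum_congr rfl fun v _ => ?_
      simp [hz, abs_mul_abs_self]
    have huu : u ⬝ᵥ (adjMat G).mulVec u = lam G * (u ⬝ᵥ u) := by
      rw [mulVec_bf]
      rw [show eigV G i₀ = lam G from (by rw [eigV, lam, hi₀])]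
      rw [dotProduct_smul, smul_eq_mul]
    have hkey : lam G * (z ⬝ᵥ z) ≤ z ⬝ᵥ (adjMat G).mulVec z := by
      rw [hzz, ← huu]
      simp only [dotProduct, Matrix.mulVec]
      refine Finset.sum_le_sum fun v _ => ?_
      rw [Finset.mul_sum, Finset.mul_sum]
      refine Finset.sum_le_sum fun w _ => ?_
      have h1 : 0 ≤ adjMat G v w := adjMat_nonneg G v w
      calc u v * (adjMat G v w * u w) ≤ |u v * (adjMat G v w * u w)| := le_abs_self _
        _ = |u v| * (adjMat G v w * |u w|) := by
            rw [abs_mul, abs_mul, abs_of_nonneg h1]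
        _ = z v * (adjMat G v w * z w) := rfl
    have hcomp : ∀ j, eigV G j * co G z j = lam G * co G z j := by
      have hle : ∑ j, (lam G - eigV G j) * (co G z j)^2 ≤ 0 := by
        have h1 : lam G * (z ⬝ᵥ z) ≤ ∑ j, eigV G j * (co G z j)^2 := by
          rw [← dot_mulVec_eq]; exact hkey
        rw [dot_self_eq G z, Finset.mul_sum] at h1
        have h2 : ∑ j, (lam G - eigV G j) * (co G z j)^2
            = (∑ j, lam G * (co G z j)^2) - ∑ j, eigV G j * (co G z j)^2 := by
          rw [← Finset.sum_sub_distrib]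
          exact Finset.sum_congr rfl fun j _ => by ring
        rw [h2]
        linarith
      have hnn : ∀ j ∈ Finset.univ, (0:ℝ) ≤ (lam G - eigV G j) * (co G z j)^2 :=
        fun j _ => mul_nonneg (sub_nonneg.mpr (eigV_le_lam G j)) (sq_nonneg _)
      have h0 : ∑ j, (lam G - eigV G j) * (co G z j)^2 = 0 :=
        le_antisymm hle (Finset.sum_nonneg hnn)
      have hterm := (Finset.sum_eq_zero_iff_of_nonneg hnn).mp h0
      intro j
      rcases mul_eq_zero.mp (hterm j (Finset.mem_univ j)) with h | h
      · have : eigV G j = lam G := by linarith [sub_eq_zero.mp h]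
        rw [this]
      · have : co G z j = 0 := by
          have := sq_eq_zero_iff.mp h
          exact this
        rw [this, mul_zero, mul_zero]
    rw [mulVec_expand G z]
    have hstep : ∀ j, (co G z j * eigV G j) • bf G j = lam G • (co G z j • bf G j) := by
      intro j
      rw [smul_smul, mul_comm (co G z j), hcomp j]
    calc ∑ j, (co G z j * eigV G j) • bf G j = ∑ j, lam G • (co G z j • bf G j) :=
          Finset.sum_congr rfl fun j _ => hstep j
      _ = lam G • ∑ j, co G z j • bf G j := (Finset.smul_sum).symm
      _ = lam G • z := by rw [← sum_repr_fun]

lemma perron_pos {z : V → ℝ} (hc : G.Connected) (hnn : ∀ v, 0 ≤ z v) (hz : z ≠ 0)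
    (he : (adjMat G).mulVec z = specRad G • z) : ∀ v, 0 < z v := by
  classical
  have hzero : ∀ v w, z v = 0 → G.Adj v w → z w = 0 := by
    intro v w hv hadj
    have h1 : (adjMat G).mulVec z v = 0 := by
      rw [he, Pi.smul_apply, hv, smul_eq_mul, mul_zero]
    have h2 : ∀ w' ∈ Finset.univ, (0:ℝ) ≤ adjMat G v w' * z w' :=
      fun w' _ => mul_nonneg (adjMat_nonneg G v w') (hnn w')
    have h3 := (Finset.sum_eq_zero_iff_of_nonneg h2).mp h1
    have h4 := h3 w (Finset.mem_univ w)
    rw [adjMat_of_adj G hadj, one_mul] at h4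
    exact h4
  have hvpos : ∃ v, 0 < z v := by
    by_contra h
    push_neg at h
    exact hz (funext fun v => le_antisymm (h v) (hnn v))
  obtain ⟨v₀, hv₀⟩ := hvpos
  intro v
  rcases lt_or_eq_of_le (hnn v) with h | h
  · exact h
  -- z v = 0 : propagate zero along a walk from v to v₀
  exfalso
  obtain ⟨w⟩ := hc.preconnected v v₀
  have : z v₀ = 0 := by
    clear hv₀
    induction w with
    | nil => exact h.symm
    | cons hadj p ih => exact ih (hzero _ _ h.symm hadj).symm
  rw [this] at hv₀
  exact lt_irrefl 0 hv₀

lemma specRad_ge_one {p q : V} (hpq : G.Adj p q) : 1 ≤ specRad G := by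
  classical
  rw [specRad_eq_lam]
  set x : V → ℝ := fun v => if v = p ∨ v = q then 1 else 0 with hx
  have hne : p ≠ q := hpq.ne
  have hsum2 : ∀ f : V → ℝ, (∑ v, if v = p ∨ v = q then f v else 0) = f p + f q := by
    intro f
    have : ∀ v, (if v = p ∨ v = q then f v else 0)
        = (if v = p then f v else 0) + (if v = q then f v else 0) := by
      intro v
      by_cases h1 : v = p
      · subst h1; rw [if_pos (Or.inl rfl), if_pos rfl, if_neg hne, add_zero]
      · by_cases h2 : v = q
        · subst h2; rw [if_pos (Or.inr rfl), if_neg h1, if_pos rfl, zero_add]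
        · rw [if_neg (by tauto), if_neg h1, if_neg h2, add_zero]
    rw [Finset.sum_congr rfl fun v _ => this v, Finset.sum_add_distrib,
      Finset.sum_ite_eq' Finset.univ p f, Finset.sum_ite_eq' Finset.univ q f,
      if_pos (Finset.mem_univ p), if_pos (Finset.mem_univ q)]
  have hxx : x ⬝ᵥ x = 2 := by
    show (∑ v, x v * x v) = 2
    have : ∀ v, x v * x v = if v = p ∨ v = q then (1:ℝ) else 0 := by
      intro v; rw [hx]; dsimp only; split <;> norm_num
    rw [Finset.sum_congr rfl fun v _ => this v, hsum2 (fun _ => (1:ℝ))]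
    norm_num
  have hAx : x ⬝ᵥ (adjMat G).mulVec x = 2 := by
    show (∑ v, x v * (adjMat G).mulVec x v) = 2
    have hinner : ∀ v, (adjMat G).mulVec x v = adjMat G v p + adjMat G v q := by
      intro v
      show (∑ w, adjMat G v w * x w) = _
      have : ∀ w, adjMat G v w * x w = if w = p ∨ w = q then adjMat G v w else 0 := by
        intro w; rw [hx]; dsimp only; split <;> norm_num
      rw [Finset.sum_congr rfl fun w _ => this w, hsum2 (fun w => adjMat G v w)]
    have : ∀ v, x v * (adjMat G).mulVec x v
        = if v = p ∨ v = q then adjMat G v p + adjMat G v q else 0 := by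
      intro v; rw [hinner v, hx]; dsimp only; split <;> norm_num
    rw [Finset.sum_congr rfl fun v _ => this v, hsum2 (fun v => adjMat G v p + adjMat G v q)]
    rw [adjMat_apply, adjMat_apply, adjMat_apply, adjMat_apply,
      if_neg (G.irrefl), if_neg (G.irrefl), if_pos hpq, if_pos hpq.symm]
    norm_num
  have := rayleigh_le G x
  rw [hxx, hAx] at this
  linarith

lemma specRad_lt_of_lt {G' : SimpleGraph V} (hle : ∀ a b, G.Adj a b → G'.Adj a b)
    (hc : G.Connected) {p q : V} (hpq : G'.Adj p q) (hnpq : ¬ G.Adj p q) :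
    specRad G < specRad G' := by
  classical
  obtain ⟨z, hnn, hz, he⟩ := perron_exists G
  have hpos := perron_pos G hc hnn hz he
  have hn : 0 < z ⬝ᵥ z := dot_self_pos hz
  have h1 : z ⬝ᵥ (adjMat G).mulVec z = specRad G * (z ⬝ᵥ z) := by
    rw [he, dotProduct_smul, smul_eq_mul]
  have hAle : ∀ v w, adjMat G v w ≤ adjMat G' v w := by
    intro v w
    rw [adjMat_apply, adjMat_apply]
    by_cases h : G.Adj v w
    · rw [if_pos h, if_pos (hle _ _ h)]
    · rw [if_neg h]; split <;> norm_num
  have h2 : z ⬝ᵥ (adjMat G).mulVec z < z ⬝ᵥ (adjMat G').mulVec z := by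
    simp only [dotProduct, Matrix.mulVec]
    have hinnle : ∀ v, (∑ w, adjMat G v w * z w) ≤ ∑ w, adjMat G' v w * z w :=
      fun v => Finset.sum_le_sum fun w _ => mul_le_mul_of_nonneg_right (hAle v w) (hnn w)
    refine Finset.sum_lt_sum
      (fun v _ => mul_le_mul_of_nonneg_left (hinnle v) (hnn v))
      ⟨p, Finset.mem_univ p, ?_⟩
    refine mul_lt_mul_of_pos_left ?_ (hpos p)
    refine Finset.sum_lt_sum
      (fun w _ => mul_le_mul_of_nonneg_right (hAle p w) (hnn w))
      ⟨q, Finset.mem_univ q, ?_⟩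
    rw [adjMat_apply, adjMat_apply, if_neg hnpq, if_pos hpq]
    rw [zero_mul, one_mul]
    exact hpos q
  have h3 := rayleigh_le G' z
  rw [← specRad_eq_lam] at h3
  have h4 : specRad G * (z ⬝ᵥ z) < specRad G' * (z ⬝ᵥ z) := by
    rw [← h1]
    exact lt_of_lt_of_le h2 h3
  exact lt_of_mul_lt_mul_right h4 (le_of_lt hn)

end Spectral

section Comb

variable {G : SimpleGraph V}

/-- Reachability within a vertex set. -/
inductive ReachIn (G : SimpleGraph V) (S : Set V) : V → V → Prop
  | single {a : V} (ha : a ∈ S) : ReachIn G S a a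
  | cons {a b c : V} (hab : G.Adj a b) (ha : a ∈ S) (h : ReachIn G S b c) : ReachIn G S a c

namespace ReachIn

lemma mem_left {S : Set V} {a b : V} (h : ReachIn G S a b) : a ∈ S := by
  cases h with
  | single ha => exact ha
  | cons hab ha h => exact ha

lemma mem_right {S : Set V} {a b : V} (h : ReachIn G S a b) : b ∈ S := by
  induction h with
  | single ha => exact ha
  | cons hab ha h ih => exact ih

lemma mono {S T : Set V} (hST : S ⊆ T) {a b : V} (h : ReachIn G S a b) :
    ReachIn G T a b := by
  induction h with
  | single ha => exact single (hST ha)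
  | cons hab ha h ih => exact cons hab (hST ha) ih

lemma trans {S : Set V} {a b c : V} (h1 : ReachIn G S a b) (h2 : ReachIn G S b c) :
    ReachIn G S a c := by
  induction h1 with
  | single ha => exact h2
  | cons hab ha h ih => exact cons hab ha (ih h2)

lemma snoc {S : Set V} {a b c : V} (h : ReachIn G S a b) (hbc : G.Adj b c) (hc : c ∈ S) :
    ReachIn G S a c :=
  h.trans (cons hbc h.mem_right (single hc))

lemma symm {S : Set V} {a b : V} (h : ReachIn G S a b) : ReachIn G S b a := by
  induction h with
  | single ha => exact single ha
  | cons hab ha h ih => exact ih.snoc hab.symm ha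

lemma congr_adj {G' : SimpleGraph V} {S : Set V}
    (hagree : ∀ a ∈ S, ∀ b ∈ S, G.Adj a b → G'.Adj a b) {a b : V}
    (h : ReachIn G S a b) : ReachIn G' S a b := by
  induction h with
  | single ha => exact single ha
  | cons hab ha h ih => exact cons (hagree _ ha _ h.mem_left hab) ha ih

lemma exists_boundary {S K : Set V} {a b : V} (h : ReachIn G S a b) :
    a ∈ K → b ∉ K → ∃ p q, p ∈ K ∧ q ∉ K ∧ q ∈ S ∧ G.Adj p q ∧ ReachIn G S a p := by
  induction h with
  | single haS => exact fun ha hb => absurd ha hb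
  | @cons x y c hab hx h ih =>
    intro hxK hcK
    by_cases hy : y ∈ K
    · obtain ⟨p, q, hp, hq, hqS, hadj, hr⟩ := ih hy hcK
      exact ⟨p, q, hp, hq, hqS, hadj, (ReachIn.cons hab hx hr)⟩
    · exact ⟨x, y, hxK, hy, h.mem_left, hab, ReachIn.single hx⟩

end ReachIn

/-- Connectivity of a vertex set. -/
def Conn (G : SimpleGraph V) (S : Set V) : Prop :=
  S.Nonempty ∧ ∀ a ∈ S, ∀ b ∈ S, ReachIn G S a b

lemma conn_of_hub {S : Set V} {x : V} (hx : x ∈ S)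
    (h : ∀ y ∈ S, ReachIn G S y x) : Conn G S :=
  ⟨⟨x, hx⟩, fun a ha b hb => (h a ha).trans (h b hb).symm⟩

lemma conn_congr_adj {G' : SimpleGraph V} {S : Set V}
    (hagree : ∀ a ∈ S, ∀ b ∈ S, G.Adj a b ↔ G'.Adj a b) :
    Conn G S ↔ Conn G' S := by
  constructor <;> rintro ⟨hne, h⟩ <;> refine ⟨hne, fun a ha b hb => ?_⟩
  · exact (h a ha b hb).congr_adj (fun a ha b hb => (hagree a ha b hb).1)
  · exact (h a ha b hb).congr_adj (fun a ha b hb => (hagree a ha b hb).2)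

lemma reachIn_of_induce_walk {S : Set V} : ∀ {a b : ↑S} (_ : (G.induce S).Walk a b),
    ReachIn G S a.1 b.1 := by
  intro a b w
  induction w with
  | nil => exact ReachIn.single (Subtype.coe_prop _)
  | @cons u v w h p ih => exact ReachIn.cons h (Subtype.coe_prop _) ih

lemma reachable_induce_of_reachIn {S : Set V} {a b : V} (h : ReachIn G S a b) :
    (G.induce S).Reachable ⟨a, h.mem_left⟩ ⟨b, h.mem_right⟩ := by
  induction h with
  | single ha => rfl
  | @cons a b c hab ha h ih =>
    exact (SimpleGraph.Adj.reachable (by exact hab :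
      (G.induce S).Adj ⟨a, ha⟩ ⟨b, h.mem_left⟩)).trans ih

lemma induce_connected_iff {S : Set V} : (G.induce S).Connected ↔ Conn G S := by
  constructor
  · intro h
    have hne : S.Nonempty := by
      obtain ⟨⟨x, hx⟩⟩ := h.nonempty
      exact ⟨x, hx⟩
    refine ⟨hne, fun a ha b hb => ?_⟩
    obtain ⟨w⟩ := h.preconnected ⟨a, ha⟩ ⟨b, hb⟩
    exact reachIn_of_induce_walk w
  · rintro ⟨⟨x, hx⟩, h⟩
    rw [SimpleGraph.connected_iff]
    refine ⟨fun a b => ?_, ⟨⟨x, hx⟩⟩⟩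
    have := reachable_induce_of_reachIn (h a.1 a.2 b.1 b.2)
    simpa using this

lemma delete_verts_mem {S : Set V} {v : ↑S}
    (A : ↑(((⊤ : (G.induce S).Subgraph).deleteVerts {v}).verts)) :
    (A.1.1 : V) ∈ S \ {(v : V)} := by
  refine ⟨A.1.2, ?_⟩
  have h2 := A.2
  simp only [SimpleGraph.Subgraph.deleteVerts_verts, Set.mem_diff,
    SimpleGraph.Subgraph.verts_top, Set.mem_univ, true_and, Set.mem_singleton_iff] at h2
  exact fun h => h2 (Subtype.ext h)

lemma reachIn_of_delete_walk {S : Set V} {v : ↑S} :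
    ∀ {A B : ↑(((⊤ : (G.induce S).Subgraph).deleteVerts {v}).verts)}
      (_ : ((⊤ : (G.induce S).Subgraph).deleteVerts {v}).coe.Walk A B),
      ReachIn G (S \ {(v : V)}) A.1.1 B.1.1 := by
  intro A B w
  induction w with
  | nil => exact ReachIn.single (delete_verts_mem _)
  | @cons X Y Z h p ih =>
    have h' := h
    simp only [SimpleGraph.Subgraph.coe_adj, SimpleGraph.Subgraph.deleteVerts_adj,
      SimpleGraph.Subgraph.top_adj, SimpleGraph.comap_adj, Function.Embedding.coe_subtype,
      SimpleGraph.Subgraph.verts_top] at h'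
    exact ReachIn.cons h'.2.2.2.2 (delete_verts_mem _) ih

lemma delete_reachable_of_reachIn {S : Set V} {v : ↑S} {a b : V}
    (h : ReachIn G (S \ {(v : V)}) a b) :
    ∀ (A B : ↑(((⊤ : (G.induce S).Subgraph).deleteVerts {v}).verts)),
      A.1.1 = a → B.1.1 = b →
      ((⊤ : (G.induce S).Subgraph).deleteVerts {v}).coe.Reachable A B := by
  induction h with
  | single ha =>
    intro A B hA hB
    have : A = B := Subtype.ext (Subtype.ext (hA.trans hB.symm))
    rw [this]
  | @cons a b c hab ha h ih =>
    intro A B hA hB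
    have hbmem : (⟨b, h.mem_left.1⟩ : ↑S) ∈
        ((⊤ : (G.induce S).Subgraph).deleteVerts {v}).verts := by
      simp only [SimpleGraph.Subgraph.deleteVerts_verts, Set.mem_diff,
        SimpleGraph.Subgraph.verts_top, Set.mem_univ, true_and, Set.mem_singleton_iff]
      exact fun hc => h.mem_left.2 (congrArg Subtype.val hc)
    refine (SimpleGraph.Adj.reachable ?_).trans
      (ih ⟨⟨b, h.mem_left.1⟩, hbmem⟩ B rfl hB)
    simp only [SimpleGraph.Subgraph.coe_adj, SimpleGraph.Subgraph.deleteVerts_adj,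
      SimpleGraph.Subgraph.top_adj, SimpleGraph.comap_adj, Function.Embedding.coe_subtype,
      SimpleGraph.Subgraph.verts_top]
    refine ⟨Set.mem_univ _, ?_, Set.mem_univ _, ?_, ?_⟩
    · intro hc
      refine ha.2 ?_
      rw [Set.mem_singleton_iff] at hc ⊢
      rw [← hA]
      exact congrArg Subtype.val hc
    · intro hc
      rw [Set.mem_singleton_iff] at hc
      exact h.mem_left.2 (congrArg Subtype.val hc)
    · rw [hA]; exact hab

lemma delete_connected_iff {S : Set V} (v : ↑S) :
    ((⊤ : (G.induce S).Subgraph).deleteVerts {v}).coe.Connected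
      ↔ Conn G (S \ {(v : V)}) := by
  constructor
  · intro h
    have hne : (S \ {(v : V)}).Nonempty := by
      obtain ⟨⟨⟨x, hxS⟩, hx⟩⟩ := h.nonempty
      refine ⟨x, hxS, ?_⟩
      simp only [SimpleGraph.Subgraph.deleteVerts_verts, Set.mem_diff,
        Set.mem_singleton_iff] at hx
      intro hxv
      exact hx.2 (Subtype.ext hxv)
    refine ⟨hne, fun a ha b hb => ?_⟩
    have hmem : ∀ (x : V) (hx : x ∈ S \ {(v:V)}), (⟨x, hx.1⟩ : ↑S) ∈
        ((⊤ : (G.induce S).Subgraph).deleteVerts {v}).verts := by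
      intro x hx
      simp only [SimpleGraph.Subgraph.deleteVerts_verts, Set.mem_diff,
        SimpleGraph.Subgraph.verts_top, Set.mem_univ, true_and, Set.mem_singleton_iff]
      exact fun hc => hx.2 (congrArg Subtype.val hc)
    obtain ⟨w⟩ := h.preconnected ⟨⟨a, ha.1⟩, hmem a ha⟩ ⟨⟨b, hb.1⟩, hmem b hb⟩
    exact reachIn_of_delete_walk w
  · rintro ⟨⟨x, hx⟩, h⟩
    have hmem : ∀ (y : V) (hy : y ∈ S \ {(v:V)}), (⟨y, hy.1⟩ : ↑S) ∈
        ((⊤ : (G.induce S).Subgraph).deleteVerts {v}).verts := by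
      intro y hy
      simp only [SimpleGraph.Subgraph.deleteVerts_verts, Set.mem_diff,
        SimpleGraph.Subgraph.verts_top, Set.mem_univ, true_and, Set.mem_singleton_iff]
      exact fun hc => hy.2 (congrArg Subtype.val hc)
    rw [SimpleGraph.connected_iff]
    refine ⟨fun A B => ?_, ⟨⟨⟨x, hx.1⟩, hmem x hx⟩⟩⟩
    have hA := A.2
    have hB := B.2
    simp only [SimpleGraph.Subgraph.deleteVerts_verts, Set.mem_diff,
      SimpleGraph.Subgraph.verts_top, Set.mem_univ, true_and, Set.mem_singleton_iff] at hA hB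
    have haS : (A.1.1 : V) ∈ S \ {(v:V)} := ⟨A.1.2, fun hc => hA (Subtype.ext hc)⟩
    have hbS : (B.1.1 : V) ∈ S \ {(v:V)} := ⟨B.1.2, fun hc => hB (Subtype.ext hc)⟩
    exact delete_reachable_of_reachIn (h _ haS _ hbS) A B rfl rfl

/-- `S` induces a connected subgraph with no cut vertex. -/
def GoodSet (G : SimpleGraph V) (S : Set V) : Prop :=
  Conn G S ∧ ∀ v ∈ S, Conn G (S \ {v})

lemma goodSet_iff {S : Set V} :
    ((G.induce S).Connected ∧ ∀ v, ¬ IsCutVertex (G.induce S) v) ↔ GoodSet G S := by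
  constructor
  · rintro ⟨h1, h2⟩
    refine ⟨induce_connected_iff.mp h1, fun v hv => ?_⟩
    have h3 := h2 ⟨v, hv⟩
    rw [IsCutVertex, not_and, not_not] at h3
    exact (delete_connected_iff ⟨v, hv⟩).mp (h3 h1)
  · rintro ⟨h1, h2⟩
    refine ⟨induce_connected_iff.mpr h1, fun v => ?_⟩
    rw [IsCutVertex, not_and, not_not]
    intro _
    exact (delete_connected_iff v).mpr (h2 v.1 v.2)

lemma isBlock_iff {B : Set V} :
    IsBlock G B ↔ GoodSet G B ∧ ∀ C : Set V, B ⊆ C → GoodSet G C → B = C := by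
  constructor
  · rintro ⟨h1, h2, h3⟩
    refine ⟨goodSet_iff.mp ⟨h1, h2⟩, fun C hBC hC => ?_⟩
    have h4 := goodSet_iff.mpr hC
    exact h3 C hBC h4.1 h4.2
  · rintro ⟨hB, hmax⟩
    have h4 := goodSet_iff.mpr hB
    exact ⟨h4.1, h4.2, fun C hBC hc1 hc2 => hmax C hBC (goodSet_iff.mp ⟨hc1, hc2⟩)⟩

lemma goodSet_congr_adj {G' : SimpleGraph V} {S : Set V}
    (hagree : ∀ a ∈ S, ∀ b ∈ S, G.Adj a b ↔ G'.Adj a b) :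
    GoodSet G S ↔ GoodSet G' S := by
  unfold GoodSet
  rw [conn_congr_adj hagree]
  refine and_congr Iff.rfl (forall_congr' fun v => forall_congr' fun hv => ?_)
  exact conn_congr_adj fun a ha b hb => hagree a ha.1 b hb.1

/-- A nontrivial clique is a good set. -/
lemma goodSet_of_clique {S : Set V} (hcl : S.Pairwise G.Adj) (hnt : S.Nontrivial) :
    GoodSet G S := by
  have hub : ∀ T : Set V, T ⊆ S → ∀ x ∈ T, Conn G T := by
    intro T hTS x hx
    refine conn_of_hub hx fun y hy => ?_
    by_cases hyx : y = x
    · subst hyx; exact ReachIn.single hy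
    · exact ReachIn.cons (hcl (hTS hy) (hTS hx) hyx) hy (ReachIn.single hx)
  constructor
  · obtain ⟨x, hx⟩ := hnt.nonempty
    exact hub S (subset_rfl) x hx
  · intro v hv
    obtain ⟨x, hxS, hxv⟩ := hnt.exists_ne v
    exact hub (S \ {v}) Set.diff_subset x ⟨hxS, hxv⟩

/-- Union of two cliques sharing two vertices is a good set. -/
lemma goodSet_union_cliques {B B' : Set V} (hB : B.Pairwise G.Adj) (hB' : B'.Pairwise G.Adj)
    {x y : V} (hx : x ∈ B ∩ B') (hy : y ∈ B ∩ B') (hxy : x ≠ y) :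
    GoodSet G (B ∪ B') := by
  have hub : ∀ T : Set V, T ⊆ B ∪ B' → ∀ z, z ∈ B ∩ B' → z ∈ T → Conn G T := by
    intro T hTS z hz hzT
    refine conn_of_hub hzT fun w hw => ?_
    by_cases hwz : w = z
    · subst hwz; exact ReachIn.single hzT
    · rcases hTS hw with h | h
      · exact ReachIn.cons (hB h hz.1 hwz) hw (ReachIn.single hzT)
      · exact ReachIn.cons (hB' h hz.2 hwz) hw (ReachIn.single hzT)
  constructor
  · exact hub _ subset_rfl x hx (Or.inl hx.1)
  · intro v hv
    by_cases hxv : x = v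
    · refine hub _ Set.diff_subset y hy ⟨Or.inl hy.1, ?_⟩
      subst hxv
      rw [Set.mem_singleton_iff]
      exact fun h => hxy h.symm
    · exact hub _ Set.diff_subset x hx ⟨Or.inl hx.1, hxv⟩

lemma block_nontrivial {B : Set V} (hB : IsBlock G B) : B.Nontrivial := by
  obtain ⟨⟨⟨hne, -⟩, hdel⟩, -⟩ := isBlock_iff.mp hB
  obtain ⟨b, hb⟩ := hne
  obtain ⟨c, hc, hcb⟩ := (hdel b hb).1
  exact ⟨c, hc, b, hb, hcb⟩

section Finite

variable [Finite V]

lemma exists_block_superset {S : Set V} (hS : GoodSet G S) :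
    ∃ B : Set V, IsBlock G B ∧ S ⊆ B := by
  classical
  have hfin : ({T : Set V | S ⊆ T ∧ GoodSet G T}).Finite := Set.toFinite _
  obtain ⟨T, hT, hmax⟩ := Set.Finite.exists_maximalFor Set.ncard
    {T : Set V | S ⊆ T ∧ GoodSet G T} hfin ⟨S, subset_rfl, hS⟩
  refine ⟨T, isBlock_iff.mpr ⟨hT.2, fun C hTC hC => ?_⟩, hT.1⟩
  have hC' : C ∈ {T : Set V | S ⊆ T ∧ GoodSet G T} := ⟨hT.1.trans hTC, hC⟩
  have hle : T.ncard ≤ C.ncard := Set.ncard_le_ncard hTC (Set.toFinite C)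
  have heq : T.ncard = C.ncard := le_antisymm hle (hmax hC' hle)
  exact Set.eq_of_subset_of_ncard_le hTC heq.ge (Set.toFinite C)

lemma pairwise_of_goodSet (hBG : IsBlockGraph G) {S : Set V} (hS : GoodSet G S) :
    S.Pairwise G.Adj := by
  obtain ⟨B, hB, hSB⟩ := exists_block_superset hS
  exact (hBG.2 B hB).mono hSB

end Finite


/-- The support of a walk, as a set. -/
def wsupp {a b : V} (p : G.Walk a b) : Set V := {v | v ∈ p.support}

lemma reachIn_exists_walk {S : Set V} {a b : V} (h : ReachIn G S a b) :
    ∃ p : G.Walk a b, ∀ v ∈ p.support, v ∈ S := by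
  induction h with
  | single ha => exact ⟨SimpleGraph.Walk.nil, by simpa using ha⟩
  | @cons a b c hab ha h ih =>
    obtain ⟨p, hp⟩ := ih
    refine ⟨SimpleGraph.Walk.cons hab p, ?_⟩
    intro v hv
    rw [SimpleGraph.Walk.support_cons, List.mem_cons] at hv
    rcases hv with rfl | hv
    · exact ha
    · exact hp v hv

lemma walk_reachIn_end {a b : V} (p : G.Walk a b) :
    ∀ w ∈ p.support, ReachIn G (wsupp p) w b := by
  induction p with
  | nil =>
    intro w hw
    rw [SimpleGraph.Walk.support_nil, List.mem_singleton] at hw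
    subst hw
    exact ReachIn.single (by simp [wsupp])
  | @cons a c b hab q ih =>
    intro w hw
    have hsub : wsupp q ⊆ wsupp (SimpleGraph.Walk.cons hab q) := by
      intro v hv
      simp only [wsupp, Set.mem_setOf_eq, SimpleGraph.Walk.support_cons, List.mem_cons]
      exact Or.inr hv
    rw [SimpleGraph.Walk.support_cons, List.mem_cons] at hw
    rcases hw with rfl | hw
    · refine ReachIn.cons hab ?_ ((ih c q.start_mem_support).mono hsub)
      simp [wsupp]
    · exact (ih w hw).mono hsub

lemma walk_reachIn {a b : V} (p : G.Walk a b) :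
    ∀ w ∈ p.support, ∀ w' ∈ p.support, ReachIn G (wsupp p) w w' := by
  intro w hw w' hw'
  exact (walk_reachIn_end p w hw).trans (walk_reachIn_end p w' hw').symm

lemma path_avoid {s t : V} (p : G.Walk s t) (hp : p.IsPath) (v : V) :
    ∀ w ∈ p.support, w ≠ v →
      ReachIn G (wsupp p \ {v}) w s ∨ ReachIn G (wsupp p \ {v}) w t := by
  induction p with
  | nil =>
    intro w hw hwv
    rw [SimpleGraph.Walk.support_nil, List.mem_singleton] at hw
    subst hw
    exact Or.inl (ReachIn.single ⟨by simp [wsupp], hwv⟩)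
  | @cons s c t hab q ih =>
    intro w hw hwv
    have hpq : q.IsPath := hp.of_cons
    have hsnq : s ∉ q.support := (SimpleGraph.Walk.cons_isPath_iff hab q).mp hp |>.2
    have hsub : wsupp q \ {v} ⊆ wsupp (SimpleGraph.Walk.cons hab q) \ {v} := by
      intro x hx
      refine ⟨?_, hx.2⟩
      simp only [wsupp, Set.mem_setOf_eq, SimpleGraph.Walk.support_cons, List.mem_cons]
      exact Or.inr hx.1
    have hsmem : s ≠ v → s ∈ wsupp (SimpleGraph.Walk.cons hab q) \ {v} := by
      intro hsv
      exact ⟨by simp [wsupp], hsv⟩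
    rw [SimpleGraph.Walk.support_cons, List.mem_cons] at hw
    rcases hw with rfl | hw
    · exact Or.inl (ReachIn.single (hsmem hwv))
    · by_cases hvq : v ∈ q.support
      · rcases ih hpq w hw hwv with h | h
        · by_cases hsv : s = v
          · exact absurd hvq (hsv ▸ hsnq)
          · exact Or.inl ((h.mono hsub).snoc hab.symm (hsmem hsv))
        · exact Or.inr (h.mono hsub)
      · refine Or.inr ((walk_reachIn_end q w hw).mono ?_)
        intro x hx
        refine hsub ⟨hx, ?_⟩
        rw [Set.mem_singleton_iff]
        intro hxv
        subst hxv
        exact hvq hx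


lemma clique_insert {B : Set V} (hcl : B.Pairwise G.Adj) {z : V}
    (h : ∀ b ∈ B, z ≠ b → G.Adj z b) : (insert z B).Pairwise G.Adj := by
  intro a ha b hb hab
  rcases ha with rfl | ha
  · rcases hb with rfl | hb
    · exact absurd rfl hab
    · exact h b hb hab
  · rcases hb with rfl | hb
    · exact (h a ha (Ne.symm hab)).symm
    · exact hcl ha hb hab

lemma block_insert_absurd [Finite V] {B : Set V} (hB : IsBlock G B) {z : V} (hz : z ∉ B)
    (hcl : (insert z B).Pairwise G.Adj) : False := by
  have hnt : (insert z B).Nontrivial := by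
    obtain ⟨b, hb⟩ := (block_nontrivial hB).nonempty
    exact ⟨z, Set.mem_insert _ _, b, Set.mem_insert_of_mem _ hb,
      fun h => hz (by rw [h]; exact hb)⟩
  have heq := (isBlock_iff.mp hB).2 _ (Set.subset_insert z B) (goodSet_of_clique hcl hnt)
  exact hz (by rw [heq]; exact Set.mem_insert _ _)

lemma foursome [Finite V] (hBG : IsBlockGraph G) {a b c d : V}
    (hab : G.Adj a b) (hbc : G.Adj b c) (hcd : G.Adj c d) (hda : G.Adj d a)
    (hac : a ≠ c) (hbd : b ≠ d) : G.Adj a c := by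
  set S : Set V := {a, b, c, d} with hS
  have ha : a ∈ S := by simp [hS]
  have hb : b ∈ S := by simp [hS]
  have hc : c ∈ S := by simp [hS]
  have hd : d ∈ S := by simp [hS]
  have hmem : ∀ w ∈ S, w = a ∨ w = b ∨ w = c ∨ w = d := by
    intro w hw; simpa [hS] using hw
  have hgood : GoodSet G S := by
    constructor
    · refine conn_of_hub hb fun w hw => ?_
      rcases hmem w hw with rfl | rfl | rfl | rfl
      · exact ReachIn.cons hab ha (ReachIn.single hb)
      · exact ReachIn.single hb
      · exact ReachIn.cons hbc.symm hc (ReachIn.single hb)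
      · exact ReachIn.cons hda hd (ReachIn.cons hab ha (ReachIn.single hb))
    · intro v hv
      rcases hmem v hv with h1 | h1 | h1 | h1 <;> subst v
      · -- delete a, hub c
        refine conn_of_hub (⟨hc, Ne.symm hac⟩ : c ∈ S \ {a}) fun w hw => ?_
        rcases hmem w hw.1 with rfl | rfl | rfl | rfl
        · exact absurd rfl hw.2
        · exact ReachIn.cons hbc hw (ReachIn.single ⟨hc, Ne.symm hac⟩)
        · exact ReachIn.single hw
        · exact ReachIn.cons hcd.symm hw (ReachIn.single ⟨hc, Ne.symm hac⟩)
      · -- delete b, hub d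
        refine conn_of_hub (⟨hd, Ne.symm hbd⟩ : d ∈ S \ {b}) fun w hw => ?_
        rcases hmem w hw.1 with rfl | rfl | rfl | rfl
        · exact ReachIn.cons hda.symm hw (ReachIn.single ⟨hd, Ne.symm hbd⟩)
        · exact absurd rfl hw.2
        · exact ReachIn.cons hcd hw (ReachIn.single ⟨hd, Ne.symm hbd⟩)
        · exact ReachIn.single hw
      · -- delete c, hub a
        refine conn_of_hub (⟨ha, hac⟩ : a ∈ S \ {c}) fun w hw => ?_
        rcases hmem w hw.1 with rfl | rfl | rfl | rfl
        · exact ReachIn.single hw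
        · exact ReachIn.cons hab.symm hw (ReachIn.single ⟨ha, hac⟩)
        · exact absurd rfl hw.2
        · exact ReachIn.cons hda hw (ReachIn.single ⟨ha, hac⟩)
      · -- delete d, hub b
        refine conn_of_hub (⟨hb, hbd⟩ : b ∈ S \ {d}) fun w hw => ?_
        rcases hmem w hw.1 with rfl | rfl | rfl | rfl
        · exact ReachIn.cons hab hw (ReachIn.single ⟨hb, hbd⟩)
        · exact ReachIn.single hw
        · exact ReachIn.cons hbc.symm hw (ReachIn.single ⟨hb, hbd⟩)
        · exact absurd rfl hw.2
  exact pairwise_of_goodSet hBG hgood ha hc hac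

lemma gate_same [Finite V] (hBG : IsBlockGraph G) {B₀ : Set V} (hB₀ : IsBlock G B₀)
    {x y kx ky : V} (hx : x ∈ B₀) (hy : y ∈ B₀) (hxy : x ≠ y)
    (hkx : G.Adj x kx) (hky : G.Adj y ky)
    (hreach : ReachIn G B₀ᶜ kx ky) : False := by
  classical
  have hclB₀ : B₀.Pairwise G.Adj := hBG.2 B₀ hB₀
  have hxyadj : G.Adj x y := hclB₀ hx hy hxy
  obtain ⟨p₀, hp₀⟩ := reachIn_exists_walk hreach
  set p := p₀.bypass with hpdef
  have hp : p.IsPath := SimpleGraph.Walk.bypass_isPath p₀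
  have hsupp : ∀ v ∈ p.support, v ∉ B₀ :=
    fun v hv => hp₀ v (SimpleGraph.Walk.support_bypass_subset p₀ hv)
  set S₀ : Set V := wsupp p ∪ {x, y} with hS₀
  have hxS : x ∈ S₀ := Or.inr (by simp)
  have hyS : y ∈ S₀ := Or.inr (by simp)
  have hxsupp : x ∉ wsupp p := fun h => hsupp x h hx
  have hysupp : y ∉ wsupp p := fun h => hsupp y h hy
  have hmem : ∀ w ∈ S₀, w ∈ wsupp p ∨ w = x ∨ w = y := by
    intro w hw
    rcases hw with hw | hw
    · exact Or.inl hw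
    · rcases hw with rfl | hw
      · exact Or.inr (Or.inl rfl)
      · exact Or.inr (Or.inr hw)
  have hsubS : wsupp p ⊆ S₀ := fun v hv => Or.inl hv
  have hgood : GoodSet G S₀ := by
    constructor
    · refine conn_of_hub hxS fun w hw => ?_
      rcases hmem w hw with hwp | rfl | rfl
      · exact (((walk_reachIn_end p w hwp).mono hsubS).snoc hky.symm hyS).snoc
          hxyadj.symm hxS
      · exact ReachIn.single hxS
      · exact ReachIn.cons hxyadj.symm hyS (ReachIn.single hxS)
    · intro v hv
      rcases hmem v hv with hvp | h1 | h1
      · -- v in support, hub x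
        have hxv : x ≠ v := fun h => hxsupp (h ▸ hvp)
        have hyv : y ≠ v := fun h => hysupp (h ▸ hvp)
        have hxm : x ∈ S₀ \ {v} := ⟨hxS, hxv⟩
        have hym : y ∈ S₀ \ {v} := ⟨hyS, hyv⟩
        have hsub2 : wsupp p \ {v} ⊆ S₀ \ {v} := fun z hz => ⟨hsubS hz.1, hz.2⟩
        refine conn_of_hub hxm fun w hw => ?_
        rcases hmem w hw.1 with hwp | rfl | rfl
        · rcases path_avoid p hp v w hwp hw.2 with h | h
          · exact ((h.mono hsub2).snoc hkx.symm hxm)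
          · exact (((h.mono hsub2).snoc hky.symm hym).snoc hxyadj.symm hxm)
        · exact ReachIn.single hxm
        · exact ReachIn.cons hxyadj.symm hym (ReachIn.single hxm)
      · -- v = x, hub y
        subst v
        have hym : y ∈ S₀ \ {x} := ⟨hyS, Ne.symm hxy⟩
        have hsub2 : wsupp p ⊆ S₀ \ {x} := fun z hz => ⟨hsubS hz, fun h => hxsupp (h ▸ hz)⟩
        refine conn_of_hub hym fun w hw => ?_
        rcases hmem w hw.1 with hwp | rfl | rfl
        · exact ((walk_reachIn_end p w hwp).mono hsub2).snoc hky.symm hym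
        · exact absurd rfl hw.2
        · exact ReachIn.single hym
      · -- v = y, hub x
        subst v
        have hxm : x ∈ S₀ \ {y} := ⟨hxS, hxy⟩
        have hsub2 : wsupp p ⊆ S₀ \ {y} := fun z hz => ⟨hsubS hz, fun h => hysupp (h ▸ hz)⟩
        refine conn_of_hub hxm fun w hw => ?_
        rcases hmem w hw.1 with hwp | rfl | rfl
        · exact ((walk_reachIn p w hwp kx p.start_mem_support).mono hsub2).snoc hkx.symm hxm
        · exact ReachIn.single hxm
        · exact absurd rfl hw.2
  have hpair : S₀.Pairwise G.Adj := pairwise_of_goodSet hBG hgood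
  have hkxS : kx ∈ S₀ := hsubS p.start_mem_support
  have hkxB : kx ∉ B₀ := hsupp kx p.start_mem_support
  have hkxy : G.Adj kx y := hpair hkxS hyS (fun h => hkxB (h ▸ hy))
  refine block_insert_absurd hB₀ hkxB (clique_insert hclB₀ fun b hb hkxb => ?_)
  by_cases hbx : b = x
  · subst hbx; exact hkx.symm
  · by_cases hby : b = y
    · subst hby; exact hkxy
    · exact foursome hBG hkx.symm (hclB₀ hx hb (Ne.symm hbx)) (hclB₀ hb hy hby)
        hkxy.symm hkxb hxy

lemma gate_cross [Finite V] (hBG : IsBlockGraph G) {B B' : Set V}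
    (hB : IsBlock G B) (hB' : IsBlock G B') {u x y kx ky : V} (hu : B ∩ B' = {u})
    (hx : x ∈ B) (hxu : x ≠ u) (hy : y ∈ B') (hyu : y ≠ u)
    (hkx : G.Adj x kx) (hky : G.Adj y ky)
    (hreach : ReachIn G (B ∪ B')ᶜ kx ky) : False := by
  classical
  have hclB : B.Pairwise G.Adj := hBG.2 B hB
  have hclB' : B'.Pairwise G.Adj := hBG.2 B' hB'
  have huBB' : u ∈ B ∩ B' := by rw [hu]; rfl
  have huB : u ∈ B := huBB'.1
  have huB' : u ∈ B' := huBB'.2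
  have hxuadj : G.Adj x u := hclB hx huB hxu
  have huy : G.Adj u y := hclB' huB' hy (Ne.symm hyu)
  have hyB : y ∉ B := by
    intro h
    have : y ∈ B ∩ B' := ⟨h, hy⟩
    rw [hu] at this
    exact hyu this
  have hxB' : x ∉ B' := by
    intro h
    have : x ∈ B ∩ B' := ⟨hx, h⟩
    rw [hu] at this
    exact hxu this
  have hxy : x ≠ y := fun h => hyB (h ▸ hx)
  obtain ⟨p₀, hp₀⟩ := reachIn_exists_walk hreach
  set p := p₀.bypass with hpdef
  have hp : p.IsPath := SimpleGraph.Walk.bypass_isPath p₀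
  have hsupp : ∀ v ∈ p.support, v ∉ B ∪ B' :=
    fun v hv => hp₀ v (SimpleGraph.Walk.support_bypass_subset p₀ hv)
  set S₀ : Set V := wsupp p ∪ {x, u, y} with hS₀
  have hxS : x ∈ S₀ := Or.inr (by simp)
  have huS : u ∈ S₀ := Or.inr (by simp)
  have hyS : y ∈ S₀ := Or.inr (by simp)
  have hxsupp : x ∉ wsupp p := fun h => hsupp x h (Or.inl hx)
  have husupp : u ∉ wsupp p := fun h => hsupp u h (Or.inl huB)
  have hysupp : y ∉ wsupp p := fun h => hsupp y h (Or.inr hy)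
  have hmem : ∀ w ∈ S₀, w ∈ wsupp p ∨ w = x ∨ w = u ∨ w = y := by
    intro w hw
    rcases hw with hw | hw
    · exact Or.inl hw
    · rcases hw with rfl | hw
      · exact Or.inr (Or.inl rfl)
      · rcases hw with rfl | hw
        · exact Or.inr (Or.inr (Or.inl rfl))
        · exact Or.inr (Or.inr (Or.inr hw))
  have hsubS : wsupp p ⊆ S₀ := fun v hv => Or.inl hv
  have hgood : GoodSet G S₀ := by
    constructor
    · refine conn_of_hub huS fun w hw => ?_
      rcases hmem w hw with hwp | rfl | rfl | rfl
      · exact (((walk_reachIn_end p w hwp).mono hsubS).snoc hky.symm hyS).snoc huy.symm huS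
      · exact ReachIn.cons hxuadj hxS (ReachIn.single huS)
      · exact ReachIn.single huS
      · exact ReachIn.cons huy.symm hyS (ReachIn.single huS)
    · intro v hv
      rcases hmem v hv with hvp | h1 | h1 | h1
      · -- v in supp, hub u
        have hxv : x ≠ v := fun h => hxsupp (h ▸ hvp)
        have huv : u ≠ v := fun h => husupp (h ▸ hvp)
        have hyv : y ≠ v := fun h => hysupp (h ▸ hvp)
        have hxm : x ∈ S₀ \ {v} := ⟨hxS, hxv⟩
        have hum : u ∈ S₀ \ {v} := ⟨huS, huv⟩
        have hym : y ∈ S₀ \ {v} := ⟨hyS, hyv⟩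
        have hsub2 : wsupp p \ {v} ⊆ S₀ \ {v} := fun z hz => ⟨hsubS hz.1, hz.2⟩
        refine conn_of_hub hum fun w hw => ?_
        rcases hmem w hw.1 with hwp | rfl | rfl | rfl
        · rcases path_avoid p hp v w hwp hw.2 with h | h
          · exact (((h.mono hsub2).snoc hkx.symm hxm).snoc hxuadj hum)
          · exact (((h.mono hsub2).snoc hky.symm hym).snoc huy.symm hum)
        · exact ReachIn.cons hxuadj hxm (ReachIn.single hum)
        · exact ReachIn.single hum
        · exact ReachIn.cons huy.symm hym (ReachIn.single hum)
      · -- v = x, hub u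
        subst v
        have hum : u ∈ S₀ \ {x} := ⟨huS, Ne.symm hxu⟩
        have hym : y ∈ S₀ \ {x} := ⟨hyS, Ne.symm hxy⟩
        have hsub2 : wsupp p ⊆ S₀ \ {x} := fun z hz => ⟨hsubS hz, fun h => hxsupp (h ▸ hz)⟩
        refine conn_of_hub hum fun w hw => ?_
        rcases hmem w hw.1 with hwp | rfl | rfl | rfl
        · exact (((walk_reachIn_end p w hwp).mono hsub2).snoc hky.symm hym).snoc huy.symm hum
        · exact absurd rfl hw.2
        · exact ReachIn.single hum
        · exact ReachIn.cons huy.symm hym (ReachIn.single hum)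
      · -- v = u, hub x
        subst v
        have hxm : x ∈ S₀ \ {u} := ⟨hxS, hxu⟩
        have hym : y ∈ S₀ \ {u} := ⟨hyS, hyu⟩
        have hsub2 : wsupp p ⊆ S₀ \ {u} := fun z hz => ⟨hsubS hz, fun h => husupp (h ▸ hz)⟩
        refine conn_of_hub hxm fun w hw => ?_
        rcases hmem w hw.1 with hwp | rfl | rfl | rfl
        · exact ((walk_reachIn p w hwp kx p.start_mem_support).mono hsub2).snoc hkx.symm hxm
        · exact ReachIn.single hxm
        · exact absurd rfl hw.2
        · refine ReachIn.cons hky hym ?_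
          exact ((walk_reachIn p ky p.end_mem_support kx p.start_mem_support).mono
            hsub2).snoc hkx.symm hxm
      · -- v = y, hub u
        subst v
        have hxm : x ∈ S₀ \ {y} := ⟨hxS, hxy⟩
        have hum : u ∈ S₀ \ {y} := ⟨huS, Ne.symm hyu⟩
        have hsub2 : wsupp p ⊆ S₀ \ {y} := fun z hz => ⟨hsubS hz, fun h => hysupp (h ▸ hz)⟩
        refine conn_of_hub hum fun w hw => ?_
        rcases hmem w hw.1 with hwp | rfl | rfl | rfl
        · exact (((walk_reachIn p w hwp kx p.start_mem_support).mono hsub2).snoc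
            hkx.symm hxm).snoc hxuadj hum
        · exact ReachIn.cons hxuadj hxm (ReachIn.single hum)
        · exact ReachIn.single hum
        · exact absurd rfl hw.2
  have hpair : S₀.Pairwise G.Adj := pairwise_of_goodSet hBG hgood
  have hxyadj : G.Adj x y := hpair hxS hyS hxy
  refine block_insert_absurd hB hyB (clique_insert hclB fun b hb hyb => ?_)
  by_cases hbx : b = x
  · subst hbx; exact hxyadj.symm
  · by_cases hbu : b = u
    · subst hbu; exact huy.symm
    · exact foursome hBG hxyadj.symm (hclB hx hb (Ne.symm hbx)) (hclB hb huB hbu) huy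
        (fun h => hyB (h ▸ hb)) hxu


lemma isBlockGraph_merge [Finite V] (hBG : IsBlockGraph G) {B B' : Set V}
    (hB : IsBlock G B) (hB' : IsBlock G B') {u : V} (hu : B ∩ B' = {u})
    (G' : SimpleGraph V)
    (hG'adj : ∀ a b, G'.Adj a b ↔ (G.Adj a b ∨ (a ≠ b ∧ a ∈ B ∪ B' ∧ b ∈ B ∪ B'))) :
    IsBlockGraph G' := by
  classical
  have hclB : B.Pairwise G.Adj := hBG.2 B hB
  have hclB' : B'.Pairwise G.Adj := hBG.2 B' hB'
  have hle : ∀ a b, G.Adj a b → G'.Adj a b := fun a b h => (hG'adj a b).mpr (Or.inl h)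
  constructor
  · exact hBG.1.mono (fun a b h => hle a b h)
  intro S hS
  have hP : GoodSet G' S := (isBlock_iff.mp hS).1
  by_cases hng : (∃ a ∈ S, a ∈ B \ {u}) ∧ (∃ a ∈ S, a ∈ B' \ {u})
  · obtain ⟨⟨b₀, hb₀S, hb₀⟩, ⟨w₀, hw₀S, hw₀⟩⟩ := hng
    by_cases hsub : S ⊆ B ∪ B'
    · intro a ha b hb hab
      exact (hG'adj a b).mpr (Or.inr ⟨hab, hsub ha, hsub hb⟩)
    · exfalso
      obtain ⟨z, hzS, hzC⟩ := Set.not_subset.mp hsub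
      set K : Set V := {v | ReachIn G' (S \ (B ∪ B')) z v} with hK
      have hKz : z ∈ K := ReachIn.single ⟨hzS, hzC⟩
      have hKsub : K ⊆ S \ (B ∪ B') := fun v hv => ReachIn.mem_right hv
      have hb₀C : b₀ ∈ B ∪ B' := Or.inl hb₀.1
      have hw₀C : w₀ ∈ B ∪ B' := Or.inr hw₀.1
      have hb₀K : b₀ ∉ K := fun h => (hKsub h).2 hb₀C
      have attach : ∀ p q, p ∈ K → q ∈ S → q ∉ K → G'.Adj p q →
          q ∈ B ∪ B' ∧ G.Adj p q := by
        intro p q hpK hqS hqK hadj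
        by_cases hqC : q ∈ B ∪ B'
        · refine ⟨hqC, ?_⟩
          rcases (hG'adj p q).mp hadj with h | ⟨-, hpC, -⟩
          · exact h
          · exact absurd hpC (hKsub hpK).2
        · exact absurd (ReachIn.snoc hpK hadj ⟨hqS, hqC⟩) hqK
      have hreach1 : ReachIn G' S z b₀ := hP.1.2 z hzS b₀ hb₀S
      obtain ⟨p₁, c, hp₁K, hcK, hcS, hadj1, -⟩ := hreach1.exists_boundary hKz hb₀K
      obtain ⟨hcC, hadj1G⟩ := attach p₁ c hp₁K hcS hcK hadj1
      have hb₀w₀ : b₀ ≠ w₀ := by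
        intro h
        have h2 : b₀ ∈ B ∩ B' := ⟨hb₀.1, h ▸ hw₀.1⟩
        rw [hu] at h2
        exact hb₀.2 h2
      set t : V := if b₀ = c then w₀ else b₀ with ht
      have htS : t ∈ S := by rw [ht]; split <;> assumption
      have htC : t ∈ B ∪ B' := by rw [ht]; split <;> assumption
      have htc : t ≠ c := by
        rw [ht]; split
        · next h => exact fun h2 => hb₀w₀ (h.trans h2.symm)
        · next h => exact h
      have hconn2 : Conn G' (S \ {c}) := hP.2 c hcS
      have hzc : z ≠ c := fun h => hzC (h ▸ hcC)
      have hreach2 : ReachIn G' (S \ {c}) z t := hconn2.2 z ⟨hzS, hzc⟩ t ⟨htS, htc⟩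
      have htK : t ∉ K := fun h => (hKsub h).2 htC
      obtain ⟨p₂, q₂, hp₂K, hq₂K, hq₂Sc, hadj2, -⟩ := hreach2.exists_boundary hKz htK
      obtain ⟨hq₂C, hadj2G⟩ := attach p₂ q₂ hp₂K hq₂Sc.1 hq₂K hadj2
      have hcq : c ≠ q₂ := fun h => hq₂Sc.2 h.symm
      have hreach12 : ReachIn G (B ∪ B')ᶜ p₁ p₂ := by
        have h1 : ReachIn G' (S \ (B ∪ B')) p₁ p₂ := (ReachIn.symm hp₁K).trans hp₂K
        have h2 : ReachIn G (S \ (B ∪ B')) p₁ p₂ := by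
          refine h1.congr_adj fun a ha b hb hab => ?_
          rcases (hG'adj a b).mp hab with h | ⟨-, haC, -⟩
          · exact h
          · exact absurd haC ha.2
        exact h2.mono fun v hv => hv.2
      have hsubB : (B ∪ B')ᶜ ⊆ Bᶜ := Set.compl_subset_compl.mpr Set.subset_union_left
      have hsubB' : (B ∪ B')ᶜ ⊆ B'ᶜ := Set.compl_subset_compl.mpr Set.subset_union_right
      have hgB : ∀ x y, x ∈ B → y ∈ B → x ≠ y → G.Adj x p₁ → G.Adj y p₂ → False := by
        intro x y hx hy hxy h1 h2
        exact gate_same hBG hB hx hy hxy h1 h2 (hreach12.mono hsubB)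
      have hgB'2 : ∀ x y, x ∈ B' → y ∈ B' → x ≠ y → G.Adj x p₁ → G.Adj y p₂ → False := by
        intro x y hx hy hxy h1 h2
        exact gate_same hBG hB' hx hy hxy h1 h2 (hreach12.mono hsubB')
      rcases hcC with hcB | hcB' <;> rcases hq₂C with hqB | hqB'
      · exact hgB c q₂ hcB hqB hcq hadj1G.symm hadj2G.symm
      · by_cases hcu : c = u
        · have hthis : c ∈ B' := by
            have h2 : u ∈ B ∩ B' := by rw [hu]; rfl
            rw [hcu]; exact h2.2
          exact hgB'2 c q₂ hthis hqB' hcq hadj1G.symm hadj2G.symm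
        · by_cases hqu : q₂ = u
          · have : q₂ ∈ B := by
              have h2 : u ∈ B ∩ B' := by rw [hu]; rfl
              rw [hqu]; exact h2.1
            exact hgB c q₂ hcB this hcq hadj1G.symm hadj2G.symm
          · exact gate_cross hBG hB hB' hu hcB hcu hqB' hqu hadj1G.symm hadj2G.symm hreach12
      · by_cases hcu : c = u
        · have : c ∈ B := by
            have h2 : u ∈ B ∩ B' := by rw [hu]; rfl
            rw [hcu]; exact h2.1
          exact hgB c q₂ this hqB hcq hadj1G.symm hadj2G.symm
        · by_cases hqu : q₂ = u
          · have : q₂ ∈ B' := by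
              have h2 : u ∈ B ∩ B' := by rw [hu]; rfl
              rw [hqu]; exact h2.2
            exact hgB'2 c q₂ hcB' this hcq hadj1G.symm hadj2G.symm
          · exact gate_cross hBG hB hB' hu hqB hqu hcB' hcu hadj2G.symm hadj1G.symm
              hreach12.symm
      · exact hgB'2 c q₂ hcB' hqB' hcq hadj1G.symm hadj2G.symm
  · -- adjacency agrees on S, reduce to G
    rw [not_and_or] at hng
    have hagree : ∀ a ∈ S, ∀ b ∈ S, G.Adj a b ↔ G'.Adj a b := by
      intro a ha b hb
      refine ⟨hle a b, fun hab => ?_⟩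
      rcases (hG'adj a b).mp hab with h | ⟨hne, haC, hbC⟩
      · exact h
      have hcase : ∀ x ∈ S, x ∈ B ∪ B' → x = u ∨ (x ∈ B \ {u} → False) ∨ (x ∈ B' \ {u} → False) := by
        intro x hx hxC
        by_cases hxu : x = u
        · exact Or.inl hxu
        rcases hng with h | h
        · push_neg at h
          exact Or.inr (Or.inl (fun hc => (h x hx) hc))
        · push_neg at h
          exact Or.inr (Or.inr (fun hc => (h x hx) hc))
      -- show both a and b lie in a common clique
      have hmemB : ∀ x ∈ S, x ∈ B ∪ B' → (x ∈ B ∨ x ∈ B') := fun x _ h => h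
      have key : ∀ x ∈ S, x ∈ B ∪ B' → x ∈ B ∨ x ∈ B' := hmemB
      rcases hng with h | h
      · -- no S-vertex in B \ {u} : a, b ∈ B' (or = u which is in B')
        push_neg at h
        have hmm : ∀ x ∈ S, x ∈ B ∪ B' → x ∈ B' := by
          intro x hx hxC
          rcases hxC with hxB | hxB'
          · by_cases hxu : x = u
            · have h2 : u ∈ B ∩ B' := by rw [hu]; rfl
              rw [hxu]; exact h2.2
            · exact absurd ⟨hxB, hxu⟩ (h x hx)
          · exact hxB'
        exact hclB' (hmm a ha haC) (hmm b hb hbC) hne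
      · push_neg at h
        have hmm : ∀ x ∈ S, x ∈ B ∪ B' → x ∈ B := by
          intro x hx hxC
          rcases hxC with hxB | hxB'
          · exact hxB
          · by_cases hxu : x = u
            · have h2 : u ∈ B ∩ B' := by rw [hu]; rfl
              rw [hxu]; exact h2.1
            · exact absurd ⟨hxB', hxu⟩ (h x hx)
        exact hclB (hmm a ha haC) (hmm b hb hbC) hne
    have hgood : GoodSet G S := (goodSet_congr_adj hagree).mpr hP
    exact (pairwise_of_goodSet hBG hgood).mono' (fun a b h => hle a b h)

end Comb

/-- If a block graph `G ∈ Bl(k,φ)` has a block disjoint from a maximum dissociation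
set, then `G` does not have maximal spectral radius in `Bl(k,φ)`. -/
theorem not_maximal_of_block_disjoint (k φ : ℕ) (G : SimpleGraph (Fin k)) (hG : memBl k φ G)
    (D : Set (Fin k)) (hD : IsMaxDissoc G D)
    (B : Set (Fin k)) (hB : IsBlock G B) (hBD : B ∩ D = ∅) :
    ∃ G' : SimpleGraph (Fin k), memBl k φ G' ∧ specRad G < specRad G' := by
  classical
  obtain ⟨hBG, hnum⟩ := hG
  have hGc : G.Connected := hBG.1
  haveI : Nonempty (Fin k) := hGc.nonempty
  have hbdd : ∀ H : SimpleGraph (Fin k),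
      BddAbove {n | ∃ D : Set (Fin k), IsDissoc H D ∧ D.ncard = n} := by
    intro H
    refine ⟨(Set.univ : Set (Fin k)).ncard, ?_⟩
    rintro n ⟨D', -, rfl⟩
    exact Set.ncard_le_ncard (Set.subset_univ _) Set.finite_univ
  have hone : (1:ℕ) ∈ {n | ∃ D : Set (Fin k), IsDissoc G D ∧ D.ncard = n} := by
    obtain ⟨v₀⟩ := ‹Nonempty (Fin k)›
    refine ⟨{v₀}, ?_, Set.ncard_singleton v₀⟩
    intro v _
    exact le_trans (Set.ncard_le_ncard Set.inter_subset_left (Set.toFinite _))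
      (le_of_eq (Set.ncard_singleton v₀))
  have hφ1 : 1 ≤ dissocNum G := le_csSup (hbdd G) hone
  have hDne : D.Nonempty := by
    refine Set.nonempty_of_ncard_ne_zero ?_
    rw [hD.2]
    omega
  obtain ⟨d, hd⟩ := hDne
  have hdB : d ∉ B := by
    intro h
    have h2 : d ∈ B ∩ D := ⟨h, hd⟩
    rw [hBD] at h2
    exact h2
  have hBnt := block_nontrivial hB
  obtain ⟨b₁, hb₁⟩ := hBnt.nonempty
  have hreach : ReachIn G Set.univ b₁ d := by
    obtain ⟨w⟩ := hGc.preconnected b₁ d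
    exact (walk_reachIn_end w b₁ w.start_mem_support).mono (fun x _ => Set.mem_univ x)
  obtain ⟨u, w, huB, hwB, -, huw, -⟩ := hreach.exists_boundary hb₁ hdB
  have huw_ne : u ≠ w := huw.ne
  have hpair_cl : ({u, w} : Set (Fin k)).Pairwise G.Adj := by
    intro a ha b hb hab
    rcases ha with rfl | ha
    · rcases hb with rfl | hb
      · exact absurd rfl hab
      · rw [Set.mem_singleton_iff] at hb; subst hb; exact huw
    · rw [Set.mem_singleton_iff] at ha; subst ha
      rcases hb with rfl | hb
      · exact huw.symm
      · rw [Set.mem_singleton_iff] at hb; subst hb; exact absurd rfl hab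
  have hpair_nt : ({u, w} : Set (Fin k)).Nontrivial := ⟨u, by simp, w, by simp, huw_ne⟩
  obtain ⟨B', hB', hsubB'⟩ := exists_block_superset (goodSet_of_clique hpair_cl hpair_nt)
  have huB' : u ∈ B' := hsubB' (by simp)
  have hwB' : w ∈ B' := hsubB' (by simp)
  have hclB := hBG.2 B hB
  have hclB' := hBG.2 B' hB'
  have hBB' : B ∩ B' = {u} := by
    refine Set.eq_singleton_iff_unique_mem.mpr ⟨⟨huB, huB'⟩, ?_⟩
    intro x hx
    by_contra hxu
    have hgood := goodSet_union_cliques hclB hclB' ⟨huB, huB'⟩ hx (fun h => hxu h.symm)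
    have heq := (isBlock_iff.mp hB).2 (B ∪ B') Set.subset_union_left hgood
    exact hwB (by rw [heq]; exact Or.inr hwB')
  have hnon : ∃ p q, p ∈ B ∪ B' ∧ q ∈ B ∪ B' ∧ p ≠ q ∧ ¬ G.Adj p q := by
    by_contra hcon
    push_neg at hcon
    have hclC : (B ∪ B').Pairwise G.Adj := fun a ha b hb hab => hcon a b ha hb hab
    have heq := (isBlock_iff.mp hB).2 (B ∪ B') Set.subset_union_left
      (goodSet_of_clique hclC (hBnt.mono Set.subset_union_left))
    exact hwB (by rw [heq]; exact Or.inr hwB')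
  obtain ⟨p, q, hpC, hqC, hpq_ne, hnadj⟩ := hnon
  set Gm : SimpleGraph (Fin k) :=
    { Adj := fun a b => G.Adj a b ∨ (a ≠ b ∧ a ∈ B ∪ B' ∧ b ∈ B ∪ B')
      symm := by
        constructor
        rintro a b (h | ⟨h1, h2, h3⟩)
        · exact Or.inl h.symm
        · exact Or.inr ⟨h1.symm, h3, h2⟩
      loopless := by
        constructor
        rintro a (h | ⟨h1, -⟩)
        · exact G.irrefl h
        · exact h1 rfl } with hGmdef
  have hGmadj : ∀ a b, Gm.Adj a b ↔ (G.Adj a b ∨ (a ≠ b ∧ a ∈ B ∪ B' ∧ b ∈ B ∪ B')) :=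
    fun a b => Iff.rfl
  have hBGm : IsBlockGraph Gm := isBlockGraph_merge hBG hB hB' hBB' Gm hGmadj
  have hDGm : IsDissoc Gm D := by
    intro v hv
    have hvB : v ∉ B := by
      intro h
      have h2 : v ∈ B ∩ D := ⟨h, hv⟩
      rw [hBD] at h2
      exact h2
    have heqset : D ∩ {x | Gm.Adj v x} = D ∩ {x | G.Adj v x} := by
      ext y
      simp only [Set.mem_inter_iff, Set.mem_setOf_eq]
      constructor
      · rintro ⟨hyD, hadj | ⟨hne, hvC, hyC⟩⟩
        · exact ⟨hyD, hadj⟩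
        · have hyB : y ∉ B := by
            intro h
            have h2 : y ∈ B ∩ D := ⟨h, hyD⟩
            rw [hBD] at h2
            exact h2
          have hvB' : v ∈ B' := hvC.resolve_left hvB
          have hyB' : y ∈ B' := hyC.resolve_left hyB
          exact ⟨hyD, hclB' hvB' hyB' hne⟩
      · rintro ⟨hyD, hadj⟩
        exact ⟨hyD, Or.inl hadj⟩
    rw [dissocNum] at hnum
    rw [heqset]
    exact hD.1 v hv
  have hnumGm : dissocNum Gm = φ := by
    refine le_antisymm ?_ ?_
    · refine csSup_le ⟨D.ncard, D, hDGm, rfl⟩ ?_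
      rintro n ⟨D'', hD'', rfl⟩
      have hG'' : IsDissoc G D'' := by
        intro v hv
        refine le_trans (Set.ncard_le_ncard ?_ (Set.toFinite _)) (hD'' v hv)
        exact Set.inter_subset_inter_right _ (fun x hx => Or.inl hx)
      rw [← hnum]
      exact le_csSup (hbdd G) ⟨D'', hG'', rfl⟩
    · rw [← hnum, ← hD.2]
      exact le_csSup (hbdd Gm) ⟨D, hDGm, rfl⟩
  have hlt : specRad G < specRad Gm :=
    specRad_lt_of_lt G (fun a b h => Or.inl h) hGc
      (show Gm.Adj p q from Or.inr ⟨hpq_ne, hpC, hqC⟩) hnadj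
  exact ⟨Gm, ⟨hBGm, hnumGm⟩, hlt⟩


end SpectralBlock
end

section
/- Let G be a connected graph and let n ≥ 3. Suppose K_n is a pendant block of G on vertices w₁, w₂, …, w_n, where w₁ is a cut vertex of G (so G has at least one other block). If x is a Perron vector of G, then x_{w₂} = x_{w₃} = ⋯ = x_{w_n} and x_{w₁} > x_{w_i} for every 2 ≤ i ≤ n. -/
namespace SpectralBlock

variable {V : Type*}

open SimpleGraph

/-- Lift a walk of `G` with support inside `C` to a walk of `G.induce C`. -/
lemma walk_induce {G : SimpleGraph V} {C : Set V} :
    ∀ {a b : V} (W : G.Walk a b) (hW : ∀ c ∈ W.support, c ∈ C) (ha : a ∈ C) (hb : b ∈ C),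
    ∃ W' : (G.induce C).Walk ⟨a, ha⟩ ⟨b, hb⟩, ∀ e ∈ W'.support, (e : ↥C).1 ∈ W.support := by
  intro a b W
  induction W with
  | nil =>
    intro _ ha _
    exact ⟨.nil, by simp⟩
  | @cons a c b h p ih =>
    intro hW ha hb
    have hc : c ∈ C := hW c (by simp)
    obtain ⟨W', hW'⟩ := ih (fun e he => hW e (by simp [he])) hc hb
    refine ⟨.cons (by simpa using h) W', ?_⟩
    intro e he
    rw [SimpleGraph.Walk.support_cons] at he
    rcases List.mem_cons.mp he with rfl | he
    · simp
    · simpa using Or.inr (hW' e he)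

/-- A walk of `H` avoiding `v` gives reachability in the graph with `v` deleted. -/
lemma reach_delete {H : SimpleGraph V} {v : V} :
    ∀ {a b : V} (W : H.Walk a b) (_ : ∀ c ∈ W.support, c ≠ v)
    (ha : a ∈ ((⊤ : H.Subgraph).deleteVerts {v}).verts)
    (hb : b ∈ ((⊤ : H.Subgraph).deleteVerts {v}).verts),
    ((⊤ : H.Subgraph).deleteVerts {v}).coe.Reachable ⟨a, ha⟩ ⟨b, hb⟩ := by
  intro a b W
  induction W with
  | nil => intro _ _ _; rfl
  | @cons a c b h p ih =>
    intro hav ha hb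
    have hc : c ∈ ((⊤ : H.Subgraph).deleteVerts {v}).verts := by
      simp only [Subgraph.deleteVerts_verts, Subgraph.verts_top, Set.mem_diff, Set.mem_univ,
        Set.mem_singleton_iff, true_and]
      exact hav c (by simp)
    refine Reachable.trans ?_ (ih (fun e he => hav e (by simp [he])) hc hb)
    refine SimpleGraph.Adj.reachable ?_
    simp only [Subgraph.coe_adj, Subgraph.deleteVerts_adj, Subgraph.verts_top, Set.mem_univ,
      Set.mem_singleton_iff, Subgraph.top_adj, true_and]
    exact ⟨hav a (by simp), hav c (by simp), h⟩

/-- From reachability in the vertex-deleted graph, get a walk in `H` avoiding `v`. -/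
lemma walk_of_reach_delete {H : SimpleGraph V} {v a b : V}
    {ha : a ∈ ((⊤ : H.Subgraph).deleteVerts {v}).verts}
    {hb : b ∈ ((⊤ : H.Subgraph).deleteVerts {v}).verts}
    (h : ((⊤ : H.Subgraph).deleteVerts {v}).coe.Reachable ⟨a, ha⟩ ⟨b, hb⟩) :
    ∃ W : H.Walk a b, ∀ c ∈ W.support, c ≠ v := by
  obtain ⟨p⟩ := h
  refine ⟨p.map ((⊤ : H.Subgraph).deleteVerts {v}).hom, ?_⟩
  intro c hc
  replace hc : c ∈ p.support.map ((⊤ : H.Subgraph).deleteVerts {v}).hom :=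
    (congrArg (c ∈ ·) (SimpleGraph.Walk.support_map ((⊤ : H.Subgraph).deleteVerts {v}).hom p)).mp hc
  rw [List.mem_map] at hc
  obtain ⟨y, _, rfl⟩ := hc
  have := y.2
  simp only [Subgraph.deleteVerts_verts, Subgraph.verts_top, Set.mem_diff,
    Set.mem_singleton_iff] at this
  exact this.2


/-- Split a walk ending in `B` at the first vertex belonging to `B`. -/
lemma exists_firstHit {G : SimpleGraph V} (B : Set V) :
    ∀ {a t : V} (W : G.Walk a t) (_ : t ∈ B),
    ∃ b, b ∈ B ∧ ∃ (R : G.Walk a b) (R₂ : G.Walk b t),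
      W = R.append R₂ ∧ ∀ c ∈ R.support, c ∈ B → c = b := by
  intro a t W
  induction W with
  | @nil u =>
    intro ht
    exact ⟨u, ht, .nil, .nil, rfl, fun c hc _ => by simpa using hc⟩
  | @cons a c t h p ih =>
    intro ht
    by_cases hu : a ∈ B
    · exact ⟨a, hu, .nil, .cons h p, rfl, fun c hc _ => by simpa using hc⟩
    · obtain ⟨b, hb, R, R₂, hspec, hR⟩ := ih ht
      refine ⟨b, hb, .cons h R, R₂, by simp [hspec], ?_⟩
      intro e he heB
      rw [SimpleGraph.Walk.support_cons] at he
      rcases List.mem_cons.mp he with rfl | he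
      · exact absurd heB hu
      · exact hR e he heB

/-- For a path, any vertex other than `c` avoids either the part up to `c` or the part after. -/
lemma path_split_avoid [DecidableEq V] {G : SimpleGraph V} {a b : V} {R : G.Walk a b} (hR : R.IsPath)
    {c : V} (hc : c ∈ R.support) {v : V} (hv : v ≠ c) :
    v ∉ (R.takeUntil c hc).support ∨ v ∉ (R.dropUntil c hc).support := by
  by_contra hcon
  push_neg at hcon
  obtain ⟨h1, h2⟩ := hcon
  have hnodup := hR.support_nodup
  rw [← R.take_spec hc, SimpleGraph.Walk.support_append] at hnodup
  have h2' : v ∈ (R.dropUntil c hc).support.tail := by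
    have := (R.dropUntil c hc).support_eq_cons
    rw [this] at h2
    rcases List.mem_cons.mp h2 with rfl | h2
    · exact absurd rfl hv
    · rw [this]; exact h2
  exact (List.disjoint_of_nodup_append hnodup) h1 h2'


lemma mem_del {H : SimpleGraph V} {v a : V} (h : a ≠ v) :
    a ∈ ((⊤ : H.Subgraph).deleteVerts {v}).verts := by
  simp [Subgraph.deleteVerts_verts, h]

/-- A cut vertex has a neighbor outside any "locally connected" set containing it. -/
lemma exists_external_neighbor {G : SimpleGraph V} (hG : G.Connected) {v : V}
    (hcut : IsCutVertex G v) {B : Set V}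
    (hBconn : ∀ a ∈ B, ∀ b ∈ B, a ≠ v → b ≠ v → ∃ W : G.Walk a b, ∀ c ∈ W.support, c ≠ v)
    {b0 : V} (hb0 : b0 ∈ B) (hb0v : b0 ≠ v) :
    ∃ u, G.Adj v u ∧ u ∉ B := by
  classical
  have hnc := hcut.2
  rw [SimpleGraph.connected_iff] at hnc
  push_neg at hnc
  have hne : Nonempty ((⊤ : G.Subgraph).deleteVerts {v}).verts := ⟨⟨b0, mem_del hb0v⟩⟩
  have hnp : ¬ ((⊤ : G.Subgraph).deleteVerts {v}).coe.Preconnected := fun h => not_isEmpty_iff.mpr hne (hnc h)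
  rw [SimpleGraph.Preconnected] at hnp
  push_neg at hnp
  obtain ⟨z1, z2, hz12⟩ := hnp
  set b0' : ((⊤ : G.Subgraph).deleteVerts {v}).verts := ⟨b0, mem_del hb0v⟩ with hb0'
  have : ∃ z : ((⊤ : G.Subgraph).deleteVerts {v}).verts,
      ¬ ((⊤ : G.Subgraph).deleteVerts {v}).coe.Reachable z b0' := by
    by_cases h1 : ((⊤ : G.Subgraph).deleteVerts {v}).coe.Reachable z1 b0'
    · by_cases h2 : ((⊤ : G.Subgraph).deleteVerts {v}).coe.Reachable z2 b0'
      · exact absurd (h1.trans h2.symm) hz12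
      · exact ⟨z2, h2⟩
    · exact ⟨z1, h1⟩
  obtain ⟨z, hz⟩ := this
  have hzv : (z : V) ≠ v := by
    have := z.2
    simp only [Subgraph.deleteVerts_verts, Subgraph.verts_top, Set.mem_diff,
      Set.mem_singleton_iff] at this
    exact this.2
  obtain ⟨W⟩ := hG.preconnected (z : V) v
  have hvW : v ∈ W.support := W.end_mem_support
  set T := W.takeUntil v hvW with hT
  have hcount : T.support.count v = 1 := W.count_support_takeUntil_eq_one hvW
  obtain ⟨u, hadj, q, hq⟩ := SimpleGraph.Walk.exists_eq_cons_of_ne (Ne.symm hzv) T.reverse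
  have hvq : v ∉ q.support := by
    have h1 : T.reverse.support.count v = 1 := by
      rw [SimpleGraph.Walk.support_reverse, List.count_reverse]; exact hcount
    rw [hq, SimpleGraph.Walk.support_cons, List.count_cons_self] at h1
    exact List.count_eq_zero.mp (by omega)
  refine ⟨u, hadj, ?_⟩
  intro huB
  have huv : u ≠ v := fun h => G.irrefl (h ▸ hadj)
  -- walk from u to z avoiding v
  have hreach1 : ((⊤ : G.Subgraph).deleteVerts {v}).coe.Reachable ⟨u, mem_del huv⟩ z := by
    have hq' : ∀ c ∈ q.support, c ≠ v := fun c hc he => hvq (he ▸ hc)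
    exact reach_delete q hq' (mem_del huv) (mem_del hzv)
  obtain ⟨W2, hW2⟩ := hBconn u huB b0 hb0 huv hb0v
  have hreach2 : ((⊤ : G.Subgraph).deleteVerts {v}).coe.Reachable ⟨u, mem_del huv⟩ b0' :=
    reach_delete W2 hW2 (mem_del huv) (mem_del hb0v)
  exact hz (hreach1.symm.trans hreach2)


lemma no_external {G : SimpleGraph V} (hG : G.Connected) {n : ℕ} (hn : 3 ≤ n)
    {w : Fin n → V} (hinj : Function.Injective w)
    (hblock : IsPendantBlock G (Set.range w))
    (hcomplete : ∀ i j : Fin n, i ≠ j → G.Adj (w i) (w j))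
    (hcut : IsCutVertex G (w ⟨0, Nat.lt_of_lt_of_le (by decide) hn⟩))
    {i : Fin n} (hi : i ≠ ⟨0, Nat.lt_of_lt_of_le (by decide) hn⟩) {u : V} (hadj : G.Adj (w i) u) :
    u ∈ Set.range w := by
  classical
  set B : Set V := Set.range w with hB
  by_contra hu
  -- w i is not a cut vertex of G
  have hnotcut : ¬ IsCutVertex G (w i) := by
    intro hc
    exact hi (hinj (hblock.2 ⟨⟨i, rfl⟩, hc⟩ ⟨⟨⟨0, by omega⟩, rfl⟩, hcut⟩))
  have hdel : ((⊤ : G.Subgraph).deleteVerts {w i}).coe.Connected := by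
    by_contra h
    exact hnotcut ⟨hG, h⟩
  -- choose j ≠ 0, j ≠ i
  have hj : ∃ j : Fin n, j ≠ ⟨0, by omega⟩ ∧ j ≠ i := by
    by_cases h : i = ⟨1, by omega⟩
    · exact ⟨⟨2, by omega⟩, by simp [Fin.ext_iff], by simp [h, Fin.ext_iff]⟩
    · exact ⟨⟨1, by omega⟩, by simp [Fin.ext_iff], fun he => h he.symm⟩
  obtain ⟨j, hj0, hji⟩ := hj
  have huwi : u ≠ w i := fun h => G.irrefl (h ▸ hadj)
  have hwjwi : w j ≠ w i := fun h => hji (hinj h)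
  -- walk from u to w j in G avoiding w i
  obtain ⟨W0, hW0⟩ := walk_of_reach_delete
    (hdel.preconnected ⟨u, mem_del huwi⟩ ⟨w j, mem_del hwjwi⟩)
  set Q := W0.bypass with hQ
  have hQpath : Q.IsPath := W0.bypass_isPath
  have hQavoid : ∀ c ∈ Q.support, c ≠ w i := fun c hc => hW0 c (W0.support_bypass_subset hc)
  obtain ⟨b, hbB, R, R₂, hQeq, hfirst⟩ := exists_firstHit B Q ⟨j, rfl⟩
  have hRpath : R.IsPath := (hQeq ▸ hQpath).of_append_left
  have hRsub : ∀ c ∈ R.support, c ∈ Q.support := by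
    intro c hc; rw [hQeq, SimpleGraph.Walk.mem_support_append_iff]; exact Or.inl hc
  have hRavoid : ∀ c ∈ R.support, c ≠ w i := fun c hc => hQavoid c (hRsub c hc)
  set C : Set V := B ∪ {c | c ∈ R.support} with hC
  have hBC : B ⊆ C := Set.subset_union_left
  have huC : u ∈ C := Or.inr R.start_mem_support
  -- routing lemma
  have route : ∀ (v c : V) (hc : c ∈ R.support), c ≠ v →
      ∃ d, d ∈ B ∧ d ≠ v ∧ ∃ P : G.Walk c d, ∀ e ∈ P.support, e ∈ C ∧ e ≠ v := by
    intro v c hc hcv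
    by_cases hvd : v ∈ (R.dropUntil c hc).support
    · -- go backwards to u and then to w i
      have hvR : v ∈ R.support := R.support_dropUntil_subset hc hvd
      have hvwi : v ≠ w i := hRavoid v hvR
      have hvt : v ∉ (R.takeUntil c hc).support := by
        rcases path_split_avoid hRpath hc (Ne.symm hcv) with h | h
        · exact h
        · exact absurd hvd h
      refine ⟨w i, ⟨i, rfl⟩, Ne.symm hvwi,
        (R.takeUntil c hc).reverse.append (.cons hadj.symm .nil), ?_⟩
      intro e he
      rw [SimpleGraph.Walk.mem_support_append_iff] at he
      rcases he with he | he
      · rw [SimpleGraph.Walk.support_reverse, List.mem_reverse] at he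
        exact ⟨Or.inr (R.support_takeUntil_subset hc he), fun h => hvt (h ▸ he)⟩
      · simp only [SimpleGraph.Walk.support_cons, SimpleGraph.Walk.support_nil] at he
        rcases List.mem_cons.mp he with rfl | he
        · refine ⟨Or.inr R.start_mem_support, fun h => hvt ?_⟩
          rw [← h]; exact (R.takeUntil c hc).start_mem_support
        · rw [List.mem_singleton] at he
          subst he
          exact ⟨Or.inl ⟨i, rfl⟩, Ne.symm hvwi⟩
    · -- go forwards to b
      refine ⟨b, hbB, fun h => hvd (h ▸ (R.dropUntil c hc).end_mem_support),
        R.dropUntil c hc, ?_⟩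
      intro e he
      exact ⟨Or.inr (R.support_dropUntil_subset hc he), fun h => hvd (h ▸ he)⟩
  -- hub: some block vertex distinct from v
  have hub : ∀ v : V, ∃ k : Fin n, w k ≠ v := by
    intro v
    by_cases h : w ⟨0, by omega⟩ = v
    · refine ⟨⟨1, by omega⟩, fun h1 => ?_⟩
      have := hinj (h1.trans h.symm)
      simp [Fin.ext_iff] at this
    · exact ⟨⟨0, by omega⟩, h⟩
  -- key connectivity: within C minus v, every vertex reaches the hub
  have key : ∀ (v z : V), z ∈ C → z ≠ v → ∀ k : Fin n, w k ≠ v →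
      ∃ P : G.Walk z (w k), ∀ e ∈ P.support, e ∈ C ∧ e ≠ v := by
    intro v z hz hzv k hkv
    rcases hz with ⟨l, rfl⟩ | hzR
    · by_cases hlk : l = k
      · subst hlk
        refine ⟨.nil, ?_⟩
        intro e he
        simp only [SimpleGraph.Walk.support_nil, List.mem_singleton] at he
        subst he
        exact ⟨Or.inl ⟨l, rfl⟩, hzv⟩
      · refine ⟨.cons (hcomplete l k hlk) .nil, ?_⟩
        intro e he
        simp only [SimpleGraph.Walk.support_cons, SimpleGraph.Walk.support_nil] at he
        rcases List.mem_cons.mp he with rfl | he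
        · exact ⟨Or.inl ⟨l, rfl⟩, hzv⟩
        · rw [List.mem_singleton] at he; subst he
          exact ⟨Or.inl ⟨k, rfl⟩, hkv⟩
    · obtain ⟨d, hdB, hdv, P₁, hP₁⟩ := route v z hzR hzv
      obtain ⟨m, rfl⟩ := hdB
      by_cases hmk : m = k
      · subst hmk; exact ⟨P₁, hP₁⟩
      · refine ⟨P₁.append (.cons (hcomplete m k hmk) .nil), ?_⟩
        intro e he
        rw [SimpleGraph.Walk.mem_support_append_iff] at he
        rcases he with he | he
        · exact hP₁ e he
        · simp only [SimpleGraph.Walk.support_cons, SimpleGraph.Walk.support_nil] at he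
          rcases List.mem_cons.mp he with rfl | he
          · exact hP₁ _ P₁.end_mem_support
          · rw [List.mem_singleton] at he; subst he
            exact ⟨Or.inl ⟨k, rfl⟩, hkv⟩
  -- a vertex avoiding any two given vertices
  have pick : ∀ z1 z2 : V, ∃ v : V, z1 ≠ v ∧ z2 ≠ v := by
    intro z1 z2
    have d01 : w ⟨0, by omega⟩ ≠ w ⟨1, by omega⟩ := by
      intro h; have := hinj h; simp [Fin.ext_iff] at this
    have d02 : w ⟨0, by omega⟩ ≠ w ⟨2, by omega⟩ := by
      intro h; have := hinj h; simp [Fin.ext_iff] at this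
    have d12 : w ⟨1, by omega⟩ ≠ w ⟨2, by omega⟩ := by
      intro h; have := hinj h; simp [Fin.ext_iff] at this
    rcases eq_or_ne z1 (w ⟨0, by omega⟩) with rfl | h1
    · rcases eq_or_ne z2 (w ⟨1, by omega⟩) with rfl | h2
      · exact ⟨w ⟨2, by omega⟩, d02, d12⟩
      · exact ⟨w ⟨1, by omega⟩, d01, h2⟩
    · rcases eq_or_ne z2 (w ⟨0, by omega⟩) with rfl | h2
      · rcases eq_or_ne z1 (w ⟨1, by omega⟩) with rfl | h1'
        · exact ⟨w ⟨2, by omega⟩, d12, d02⟩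
        · exact ⟨w ⟨1, by omega⟩, h1', d01⟩
      · exact ⟨w ⟨0, by omega⟩, h1, h2⟩
  -- connectivity of the induced graph on C
  have hCconn : (G.induce C).Connected := by
    rw [SimpleGraph.connected_iff]
    refine ⟨?_, ⟨⟨u, huC⟩⟩⟩
    rintro ⟨z1, hz1⟩ ⟨z2, hz2⟩
    obtain ⟨v, hv1, hv2⟩ := pick z1 z2
    obtain ⟨k, hk⟩ := hub v
    obtain ⟨P1, hP1⟩ := key v z1 hz1 hv1 k hk
    obtain ⟨P2, hP2⟩ := key v z2 hz2 hv2 k hk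
    have hsup : ∀ c ∈ (P1.append P2.reverse).support, c ∈ C := by
      intro c hcs
      rw [SimpleGraph.Walk.mem_support_append_iff] at hcs
      rcases hcs with h | h
      · exact (hP1 c h).1
      · rw [SimpleGraph.Walk.support_reverse, List.mem_reverse] at h
        exact (hP2 c h).1
    obtain ⟨W', _⟩ := walk_induce (P1.append P2.reverse) hsup hz1 hz2
    exact ⟨W'⟩
  -- no cut vertices in the induced graph on C
  have hCnocut : ∀ v, ¬ IsCutVertex (G.induce C) v := by
    rintro v ⟨hconn', hnc⟩
    apply hnc
    rw [SimpleGraph.connected_iff]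
    obtain ⟨k, hk⟩ := hub (v : ↥C).1
    constructor
    · rintro ⟨⟨z1, hz1⟩, hz1'⟩ ⟨⟨z2, hz2⟩, hz2'⟩
      have hz1v : z1 ≠ (v : ↥C).1 := by
        intro h
        apply (Set.mem_diff _).mp hz1' |>.2
        rw [Set.mem_singleton_iff]
        exact Subtype.ext h
      have hz2v : z2 ≠ (v : ↥C).1 := by
        intro h
        apply (Set.mem_diff _).mp hz2' |>.2
        rw [Set.mem_singleton_iff]
        exact Subtype.ext h
      obtain ⟨P1, hP1⟩ := key (v : ↥C).1 z1 hz1 hz1v k hk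
      obtain ⟨P2, hP2⟩ := key (v : ↥C).1 z2 hz2 hz2v k hk
      have hsup : ∀ c ∈ (P1.append P2.reverse).support, c ∈ C ∧ c ≠ (v : ↥C).1 := by
        intro c hcs
        rw [SimpleGraph.Walk.mem_support_append_iff] at hcs
        rcases hcs with h | h
        · exact hP1 c h
        · rw [SimpleGraph.Walk.support_reverse, List.mem_reverse] at h
          exact hP2 c h
      obtain ⟨W', hW'⟩ := walk_induce (P1.append P2.reverse) (fun c hc => (hsup c hc).1) hz1 hz2
      have havoid : ∀ e ∈ W'.support, e ≠ v := by
        intro e he h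
        exact (hsup e.1 (hW' e he)).2 (by rw [h])
      exact reach_delete W' havoid (mem_del (fun h => (hsup z1 (by
        have := W'.start_mem_support
        exact hW' _ this)).2 (congrArg Subtype.val h))) (mem_del (fun h => (hsup z2 (by
        have := W'.end_mem_support
        exact hW' _ this)).2 (congrArg Subtype.val h)))
    · exact ⟨⟨⟨w k, hBC ⟨k, rfl⟩⟩, mem_del (fun h => hk (congrArg Subtype.val h))⟩⟩
  have := hblock.1.2.2 C hBC hCconn hCnocut
  rw [← this] at huC
  exact hu huC


/-- In a pendant complete block `K_n` (`n ≥ 3`) attached via the cut vertex `w 0`,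
a Perron vector is constant on the non-cut vertices and strictly larger at the
cut vertex. -/
theorem perron_on_pendant_block {V : Type*} [Fintype V] (G : SimpleGraph V)
    (hG : G.Connected) (n : ℕ) (hn : 3 ≤ n)
    (w : Fin n → V) (hinj : Function.Injective w)
    (hblock : IsPendantBlock G (Set.range w))
    (hcomplete : ∀ i j : Fin n, i ≠ j → G.Adj (w i) (w j))
    (hcut : IsCutVertex G (w ⟨0, by omega⟩))
    (x : V → ℝ) (hx : IsPerron G x) :
    (∀ i j : Fin n, i ≠ ⟨0, by omega⟩ → j ≠ ⟨0, by omega⟩ → x (w i) = x (w j)) ∧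
      (∀ i : Fin n, i ≠ ⟨0, by omega⟩ → x (w i) < x (w ⟨0, by omega⟩)) := by
  classical
  obtain ⟨hxpos, hxeig⟩ := hx
  set i0 : Fin n := ⟨0, by omega⟩ with hi0
  have eig : ∀ v : V, specRad G * x v
      = ∑ u ∈ Finset.univ.filter (fun u => G.Adj v u), x u := by
    intro v
    have h := congrFun hxeig v
    simp only [Matrix.mulVec, dotProduct, adjMat, Matrix.of_apply, Pi.smul_apply,
      smul_eq_mul] at h
    rw [← h, Finset.sum_filter]
    refine Finset.sum_congr rfl fun u _ => ?_
    by_cases hadj : G.Adj v u <;> simp [hadj]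
  have hfilter : ∀ i : Fin n, i ≠ i0 → Finset.univ.filter (fun u => G.Adj (w i) u)
      = (Finset.univ.image w).erase (w i) := by
    intro i hi
    ext u
    simp only [Finset.mem_filter, Finset.mem_univ, true_and, Finset.mem_erase, Finset.mem_image]
    constructor
    · intro hadj
      obtain ⟨k, hk⟩ := no_external hG hn hinj hblock hcomplete hcut hi hadj
      exact ⟨fun h => G.irrefl (h ▸ hadj), ⟨k, hk⟩⟩
    · rintro ⟨hne, k, -, rfl⟩
      exact hcomplete i k fun h => hne (by rw [h])
  set S : ℝ := ∑ k, x (w k) with hS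
  have hsum : ∀ i : Fin n, i ≠ i0 → specRad G * x (w i) = S - x (w i) := by
    intro i hi
    rw [eig, hfilter i hi,
      Finset.sum_erase_eq_sub (Finset.mem_image_of_mem w (Finset.mem_univ i)),
      Finset.sum_image (fun a _ b _ h => hinj h)]
  have i1 : Fin n := ⟨1, by omega⟩
  have h10 : (⟨1, by omega⟩ : Fin n) ≠ i0 := by simp [hi0, Fin.ext_iff]
  have hSge : x (w i0) + x (w ⟨1, by omega⟩) ≤ S := by
    have := Finset.sum_le_sum_of_subset_of_nonneg
      (Finset.subset_univ ({i0, ⟨1, by omega⟩} : Finset (Fin n)))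
      (fun k _ _ => (hxpos (w k)).le)
    rwa [Finset.sum_pair (Ne.symm h10)] at this
  have hrho : 0 < specRad G := by
    have h1 := hsum ⟨1, by omega⟩ h10
    have h2 : 0 < specRad G * x (w ⟨1, by omega⟩) := by
      rw [h1]; have := hxpos (w i0); linarith
    rcases mul_pos_iff.mp h2 with ⟨h, _⟩ | ⟨_, h⟩
    · exact h
    · exact absurd (hxpos (w ⟨1, by omega⟩)) (by linarith)
  have heq : ∀ i j : Fin n, i ≠ i0 → j ≠ i0 → x (w i) = x (w j) := by
    intro i j hi hj
    have h1 := hsum i hi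
    have h2 := hsum j hj
    have h3 : (specRad G + 1) * x (w i) = (specRad G + 1) * x (w j) := by
      linear_combination h1 - h2
    exact mul_left_cancel₀ (by linarith : specRad G + 1 ≠ 0) h3
  -- external neighbor of the cut vertex
  have hBconn : ∀ a ∈ Set.range w, ∀ b ∈ Set.range w, a ≠ w i0 → b ≠ w i0 →
      ∃ W : G.Walk a b, ∀ c ∈ W.support, c ≠ w i0 := by
    rintro a ⟨k, rfl⟩ b ⟨l, rfl⟩ hk hl
    by_cases hkl : k = l
    · subst hkl
      refine ⟨.nil, ?_⟩
      intro c hc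
      simp only [SimpleGraph.Walk.support_nil, List.mem_singleton] at hc
      subst hc; exact hk
    · refine ⟨.cons (hcomplete k l hkl) .nil, ?_⟩
      intro c hc
      simp only [SimpleGraph.Walk.support_cons, SimpleGraph.Walk.support_nil] at hc
      rcases List.mem_cons.mp hc with rfl | hc
      · exact hk
      · rw [List.mem_singleton] at hc; subst hc; exact hl
  obtain ⟨u0, hu0adj, hu0B⟩ := exists_external_neighbor hG hcut hBconn
    (⟨⟨1, by omega⟩, rfl⟩ : w ⟨1, by omega⟩ ∈ Set.range w)
    (fun h => h10 (hinj h))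
  have hu0img : u0 ∉ (Finset.univ.image w).erase (w i0) := by
    intro h
    exact hu0B ⟨(Finset.mem_image.mp (Finset.mem_of_mem_erase h)).choose,
      (Finset.mem_image.mp (Finset.mem_of_mem_erase h)).choose_spec.2⟩
  have hstrict : S - x (w i0) + x u0 ≤ specRad G * x (w i0) := by
    rw [eig]
    have hsubset : insert u0 ((Finset.univ.image w).erase (w i0))
        ⊆ Finset.univ.filter (fun u => G.Adj (w i0) u) := by
      intro c hc
      rcases Finset.mem_insert.mp hc with rfl | hc
      · simp only [Finset.mem_filter, Finset.mem_univ, true_and]; exact hu0adj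
      · simp only [Finset.mem_filter, Finset.mem_univ, true_and]
        obtain ⟨hne, k, -, rfl⟩ := by
          simpa only [Finset.mem_erase, Finset.mem_image] using hc
        exact hcomplete i0 k fun h => hne (by rw [h])
    have h1 := Finset.sum_le_sum_of_subset_of_nonneg hsubset
      (fun c _ _ => (hxpos c).le)
    rw [Finset.sum_insert hu0img,
      Finset.sum_erase_eq_sub (Finset.mem_image_of_mem w (Finset.mem_univ i0)),
      Finset.sum_image (fun a _ b _ h => hinj h)] at h1
    linarith
  refine ⟨heq, ?_⟩
  intro i hi
  by_contra h
  push_neg at h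
  have h2 : specRad G * x (w i0) ≤ specRad G * x (w i) :=
    mul_le_mul_of_nonneg_left h hrho.le
  have h3 := hsum i hi
  have := hxpos u0
  linarith
end SpectralBlock
end

section
/- Let G be a connected graph, let H be a block of G, and let u and v be two distinct cut vertices of G both contained in H. Let x be a Perron vector of G with eigenvalue ρ(G) and suppose x_u ≥ x_v. Let G* be the graph obtained from G by removing all blocks attached at v other than H and attaching them at u instead; that is, G* is obtained by deleting every edge vz with z outside H and adding the edge uz for each such z. Then ρ(G) ≤ ρ(G*). Moreover, if a Perron vector of G* is not a Perron vector of G, then ρ(G) < ρ(G*). -/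
namespace SpectralBlock

variable {V : Type*}

/-- The graph obtained from `G` by removing all the blocks attached at `v`
other than `H` and re-attaching them at `u`: every edge `v z` with `z ∉ H` is
deleted and replaced by the edge `u z`. -/
def shiftGraph {V : Type*} (G : SimpleGraph V) (H : Set V) (u v : V) : SimpleGraph V where
  Adj a b :=
    (G.Adj a b ∧ ¬(a = v ∧ b ∉ H) ∧ ¬(b = v ∧ a ∉ H)) ∨
    (a = u ∧ b ∉ H ∧ b ≠ u ∧ G.Adj v b) ∨
    (b = u ∧ a ∉ H ∧ a ≠ u ∧ G.Adj v a)
  symm := by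
    constructor
    rintro a b (⟨h1, h2, h3⟩ | h | h)
    · exact Or.inl ⟨h1.symm, h3, h2⟩
    · exact Or.inr (Or.inr h)
    · exact Or.inr (Or.inl h)
  loopless := by
    constructor
    rintro a (⟨h1, _, _⟩ | ⟨h1, h2, h3, _⟩ | ⟨h1, h2, h3, _⟩)
    · exact G.irrefl h1
    · exact h3 h1
    · exact h3 h1


/-! ### Auxiliary material -/

section Aux

open Matrix

set_option linter.unusedSectionVars false

section LinAlg

variable [Fintype V] [DecidableEq V]

/-- The supremum of the real eigenvalues of a matrix. -/
noncomputable def matSup (A : Matrix V V ℝ) : ℝ :=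
  sSup {r : ℝ | ∃ x : V → ℝ, x ≠ 0 ∧ A.mulVec x = r • x}

variable {A : Matrix V V ℝ} (hA : A.IsHermitian)

include hA

lemma dot_symm_mulVec (x y : V → ℝ) : x ⬝ᵥ (A *ᵥ y) = (A *ᵥ x) ⬝ᵥ y := by
  have ht : Aᵀ = A := by
    have h2 := hA; rwa [Matrix.IsHermitian, conjTranspose_eq_transpose_of_trivial] at h2
  rw [Matrix.dotProduct_mulVec, ← Matrix.mulVec_transpose, ht]

lemma repr_mulVec (y : V → ℝ) (i : V) :
    hA.eigenvectorBasis.repr (WithLp.toLp 2 (A *ᵥ y)) i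
      = hA.eigenvalues i * hA.eigenvectorBasis.repr (WithLp.toLp 2 y) i := by
  rw [OrthonormalBasis.repr_apply_apply, OrthonormalBasis.repr_apply_apply]
  have h1 : (inner ℝ (hA.eigenvectorBasis i) (WithLp.toLp 2 (A *ᵥ y)) : ℝ)
      = ⇑(hA.eigenvectorBasis i) ⬝ᵥ (A *ᵥ y) := by
    simp [PiLp.inner_apply, dotProduct, mul_comm]
  have h2 : (inner ℝ (hA.eigenvectorBasis i) (WithLp.toLp 2 y) : ℝ)
      = ⇑(hA.eigenvectorBasis i) ⬝ᵥ (y : V → ℝ) := by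
    simp [PiLp.inner_apply, dotProduct, mul_comm]
  rw [h1, h2, dot_symm_mulVec hA, hA.mulVec_eigenvectorBasis]
  simp [dotProduct, Finset.mul_sum, mul_assoc]

lemma dot_eq_sum_repr (x y : V → ℝ) :
    x ⬝ᵥ y
      = ∑ i, hA.eigenvectorBasis.repr (WithLp.toLp 2 x) i
          * hA.eigenvectorBasis.repr (WithLp.toLp 2 y) i := by
  have h := hA.eigenvectorBasis.repr.inner_map_map (WithLp.toLp 2 x) (WithLp.toLp 2 y)
  simp only [PiLp.inner_apply, RCLike.inner_apply, starRingEnd_apply, star_trivial] at h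
  simpa [dotProduct, mul_comm] using h.symm

lemma eig_mem (i : V) :
    hA.eigenvalues i ∈ {r : ℝ | ∃ x : V → ℝ, x ≠ 0 ∧ A.mulVec x = r • x} := by
  refine ⟨⇑(hA.eigenvectorBasis i), ?_, hA.mulVec_eigenvectorBasis i⟩
  intro h0
  have h1 : hA.eigenvectorBasis i = 0 := by
    ext j; exact congrFun h0 j
  have h2 := hA.eigenvectorBasis.orthonormal.1 i
  rw [h1] at h2; simp at h2

lemma spec_subset_range :
    {r : ℝ | ∃ x : V → ℝ, x ≠ 0 ∧ A.mulVec x = r • x} ⊆ Set.range hA.eigenvalues := by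
  rintro r ⟨x, hx0, hx⟩
  have hrepr : hA.eigenvectorBasis.repr (WithLp.toLp 2 x) ≠ 0 := by
    intro h
    apply hx0
    simpa using congrArg WithLp.ofLp (hA.eigenvectorBasis.repr.map_eq_zero_iff.1 h)
  obtain ⟨i, hi⟩ : ∃ i, hA.eigenvectorBasis.repr (WithLp.toLp 2 x) i ≠ 0 := by
    by_contra hc
    push_neg at hc
    exact hrepr (by ext i; simpa using hc i)
  refine ⟨i, ?_⟩
  have h1 := repr_mulVec hA x i
  rw [hx] at h1
  have h2 : hA.eigenvectorBasis.repr (WithLp.toLp 2 (r • x)) i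
      = r * hA.eigenvectorBasis.repr (WithLp.toLp 2 x) i := by
    have : WithLp.toLp 2 (r • x) = r • WithLp.toLp 2 x := rfl
    rw [this, _root_.map_smul]; rfl
  rw [h2] at h1
  replace h1 := mul_eq_mul_right_iff.1 h1
  rcases h1 with h1 | h1
  · exact h1.symm
  · exact absurd h1 hi

lemma spec_bddAbove :
    BddAbove {r : ℝ | ∃ x : V → ℝ, x ≠ 0 ∧ A.mulVec x = r • x} :=
  ((Set.finite_range hA.eigenvalues).bddAbove).mono (spec_subset_range hA)

lemma eig_le_matSup (i : V) : hA.eigenvalues i ≤ matSup A :=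
  le_csSup (spec_bddAbove hA) (eig_mem hA i)

lemma le_matSup {r : ℝ} {x : V → ℝ} (hx0 : x ≠ 0) (hx : A.mulVec x = r • x) :
    r ≤ matSup A :=
  le_csSup (spec_bddAbove hA) ⟨x, hx0, hx⟩

lemma rayleigh_le_s14 (y : V → ℝ) : y ⬝ᵥ (A *ᵥ y) ≤ matSup A * (y ⬝ᵥ y) := by
  rw [dot_eq_sum_repr hA y (A *ᵥ y),
    dot_eq_sum_repr hA y y, Finset.mul_sum]
  apply Finset.sum_le_sum
  intro i _
  rw [repr_mulVec hA]
  set c := hA.eigenvectorBasis.repr (WithLp.toLp 2 y) i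
  have : c * (hA.eigenvalues i * c) = hA.eigenvalues i * (c * c) := by ring
  rw [this]
  exact mul_le_mul_of_nonneg_right (eig_le_matSup hA i) (mul_self_nonneg c)

lemma rayleigh_eq (y : V → ℝ) (heq : y ⬝ᵥ (A *ᵥ y) = matSup A * (y ⬝ᵥ y)) :
    A *ᵥ y = matSup A • y := by
  set b := hA.eigenvectorBasis
  set c := fun i => b.repr (WithLp.toLp 2 y) i with hc
  have hkey : ∀ i, hA.eigenvalues i * c i = matSup A * c i := by
    have hsum : ∑ i, (matSup A - hA.eigenvalues i) * (c i * c i) = 0 := by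
      have h1 : y ⬝ᵥ (A *ᵥ y) = ∑ i, hA.eigenvalues i * (c i * c i) := by
        rw [dot_eq_sum_repr hA y (A *ᵥ y)]
        exact Finset.sum_congr rfl fun i _ => by rw [repr_mulVec hA]; ring
      have h2 : y ⬝ᵥ y = ∑ i, c i * c i := dot_eq_sum_repr hA y y
      rw [h1, h2, Finset.mul_sum] at heq
      calc ∑ i, (matSup A - hA.eigenvalues i) * (c i * c i)
          = ∑ i, (matSup A * (c i * c i) - hA.eigenvalues i * (c i * c i)) :=
            Finset.sum_congr rfl fun i _ => by ring
        _ = ∑ i, matSup A * (c i * c i) - ∑ i, hA.eigenvalues i * (c i * c i) :=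
            Finset.sum_sub_distrib _ _
        _ = 0 := by rw [← heq]; exact sub_self _
    have hterm := (Finset.sum_eq_zero_iff_of_nonneg (fun i _ =>
      mul_nonneg (sub_nonneg.2 (eig_le_matSup hA i)) (mul_self_nonneg (c i)))).1 hsum
    intro i
    rcases mul_eq_zero.1 (hterm i (Finset.mem_univ i)) with h | h
    · have : hA.eigenvalues i = matSup A := by linarith [sub_eq_zero.1 h]
      rw [this]
    · have : c i = 0 := mul_self_eq_zero.1 h
      rw [this, mul_zero, mul_zero]
  have hfin : b.repr (WithLp.toLp 2 (A *ᵥ y))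
      = b.repr (WithLp.toLp 2 (matSup A • y)) := by
    ext i
    rw [repr_mulVec hA]
    have : WithLp.toLp 2 (matSup A • y)
        = matSup A • WithLp.toLp 2 y := rfl
    rw [this, _root_.map_smul]
    exact hkey i
  exact congrArg WithLp.ofLp (b.repr.injective hfin)

end LinAlg

section GraphAux

/-- iso between the deleteVerts-coe graph and the induced graph on `s \ {w}`. -/
def delIso (G : SimpleGraph V) (s : Set V) (w : ↥s) :
    ((⊤ : (G.induce s).Subgraph).deleteVerts {w}).coe ≃g G.induce (s \ {(w : V)}) where
  toFun a := ⟨(a.1 : V), a.1.2, by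
    intro h
    simp only [Set.mem_singleton_iff] at h
    exact a.2.2 (by simp only [Set.mem_singleton_iff]; exact Subtype.ext h)⟩
  invFun a := ⟨⟨(a : V), a.2.1⟩, by
    refine ⟨trivial, ?_⟩
    intro h
    apply a.2.2
    simp only [Set.mem_singleton_iff] at h ⊢
    exact congrArg Subtype.val h⟩
  left_inv a := by ext; rfl
  right_inv a := by ext; rfl
  map_rel_iff' := by
    intro a b
    have ha : ¬ a.1 = w := fun h => a.2.2 h
    have hb : ¬ b.1 = w := fun h => b.2.2 h
    simp [SimpleGraph.Subgraph.deleteVerts_adj, SimpleGraph.comap_adj, ha, hb]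

lemma connected_del_iff (G : SimpleGraph V) (s : Set V) (w : ↥s) :
    ((⊤ : (G.induce s).Subgraph).deleteVerts {w}).coe.Connected ↔
      (G.induce (s \ {(w : V)})).Connected :=
  (delIso G s w).connected_iff

lemma connected_insert {G : SimpleGraph V} {s : Set V} (hs : (G.induce s).Connected)
    {z a : V} (hz : z ∉ s) (ha : a ∈ s) (hadj : G.Adj z a) :
    (G.induce (insert z s)).Connected := by
  have hsub : s ⊆ insert z s := Set.subset_insert z s
  rw [SimpleGraph.connected_iff]
  constructor
  · intro p q
    have key : ∀ p : ↥(insert z s),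
        (G.induce (insert z s)).Reachable p ⟨a, hsub ha⟩ := by
      intro p
      rcases p with ⟨p, hp⟩
      rcases Set.mem_insert_iff.1 hp with rfl | hps
      · exact SimpleGraph.Adj.reachable (by simpa using hadj)
      · have := hs.preconnected ⟨p, hps⟩ ⟨a, ha⟩
        exact this.map (G.induceHomOfLE hsub).toHom
    exact (key p).trans (key q).symm
  · exact ⟨⟨a, hsub ha⟩⟩

lemma no_common_outside {G : SimpleGraph V} {H : Set V} (hH : IsBlock G H)
    {u v : V} (huv : u ≠ v) (hu : u ∈ H) (hv : v ∈ H) {z : V} (hzH : z ∉ H)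
    (hzv : G.Adj v z) (hzu : G.Adj u z) : False := by
  have hconnH := hH.1
  have hdelH : ∀ w : ↥H, (G.induce (H \ {(w : V)})).Connected := by
    intro w
    have := hH.2.1 w
    rw [IsCutVertex, not_and, not_not] at this
    exact (connected_del_iff G H w).1 (this hconnH)
  set C := insert z H with hC
  have hCconn : (G.induce C).Connected := connected_insert hconnH hzH hu hzu.symm
  have hCnocut : ∀ w : ↥C, ¬ IsCutVertex (G.induce C) w := by
    intro w
    rw [IsCutVertex, not_and, not_not]
    intro _
    rw [connected_del_iff G C w]
    rcases w with ⟨w, hw⟩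
    rcases Set.mem_insert_iff.1 hw with rfl | hwH
    · have : C \ {w} = H := by
        rw [hC]
        ext t
        simp only [Set.mem_diff, Set.mem_insert_iff, Set.mem_singleton_iff]
        constructor
        · rintro ⟨rfl | ht, hne⟩
          · exact absurd rfl hne
          · exact ht
        · intro ht
          exact ⟨Or.inr ht, fun hh => hzH (hh ▸ ht)⟩
      rw [this]
      exact hconnH
    · have hset : C \ {w} = insert z (H \ {w}) := by
        rw [hC]
        ext t
        simp only [Set.mem_diff, Set.mem_insert_iff, Set.mem_singleton_iff]
        constructor
        · rintro ⟨rfl | ht, hne⟩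
          · exact Or.inl rfl
          · exact Or.inr ⟨ht, hne⟩
        · rintro (rfl | ⟨ht, hne⟩)
          · exact ⟨Or.inl rfl, fun hh => hzH (hh ▸ hwH)⟩
          · exact ⟨Or.inr ht, hne⟩
      rw [hset]
      have hdel := hdelH ⟨w, hwH⟩
      by_cases hwu : w = u
      · refine connected_insert hdel ?_ ⟨hv, ?_⟩ hzv.symm
        · intro hzd; exact hzH hzd.1
        · simpa [hwu] using huv.symm
      · refine connected_insert hdel ?_ ⟨hu, ?_⟩ hzu.symm
        · intro hzd; exact hzH hzd.1
        · simpa using fun hh => hwu hh.symm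
  have := hH.2.2 C (Set.subset_insert z H) hCconn hCnocut
  exact hzH (this ▸ Set.mem_insert z H)

end GraphAux

section ShiftM

open Classical in
/-- indicator of `z ∉ H ∧ G.Adj v z`. -/
noncomputable def chi (G : SimpleGraph V) (H : Set V) (v : V) : V → ℝ :=
  fun z => if z ∉ H ∧ G.Adj v z then 1 else 0

open Classical in
/-- indicator of `a = u`. -/
noncomputable def ind (u a : V) : ℝ := if a = u then 1 else 0

/-- The difference matrix. -/
noncomputable def shiftM (G : SimpleGraph V) (H : Set V) (u v : V) : Matrix V V ℝ :=
  Matrix.of fun a b =>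
    (ind u a - ind v a) * chi G H v b + (ind u b - ind v b) * chi G H v a

lemma chi_nonneg (G : SimpleGraph V) (H : Set V) (v z : V) : 0 ≤ chi G H v z := by
  unfold chi; split_ifs <;> norm_num

lemma chi_u {G : SimpleGraph V} {H : Set V} {u v : V} (hu : u ∈ H) : chi G H v u = 0 := by
  simp [chi, hu]

lemma chi_v {G : SimpleGraph V} {H : Set V} {v : V} : chi G H v v = 0 := by
  simp [chi]

lemma adjMat_decomp [Fintype V] {G : SimpleGraph V} {H : Set V} {u v : V}
    (huv : u ≠ v) (hu : u ∈ H) (hv : v ∈ H)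
    (key : ∀ z, z ∉ H → G.Adj v z → ¬ G.Adj u z) :
    adjMat (shiftGraph G H u v) = adjMat G + shiftM G H u v := by
  classical
  have key' : ∀ z, z ∉ H → G.Adj v z → ¬ G.Adj z u := fun z h1 h2 h3 => key z h1 h2 h3.symm
  ext a b
  by_cases hau : a = u <;> by_cases hav : a = v <;> by_cases hbu : b = u <;>
    by_cases hbv : b = v <;> by_cases haH : a ∈ H <;> by_cases hbH : b ∈ H <;>
    simp only [adjMat, Matrix.add_apply, Matrix.of_apply, shiftM, shiftGraph, chi, ind] <;>
    simp_all <;> split_ifs <;> simp_all [G.adj_comm]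

lemma sum_ind [Fintype V] (u : V) (y : V → ℝ) : ∑ b, ind u b * y b = y u := by
  classical
  simp [ind, ite_mul]

lemma shiftM_mulVec [Fintype V] (G : SimpleGraph V) (H : Set V) (u v : V) (y : V → ℝ) (a : V) :
    (shiftM G H u v *ᵥ y) a
      = (ind u a - ind v a) * (∑ z, chi G H v z * y z) + chi G H v a * (y u - y v) := by
  classical
  simp only [Matrix.mulVec, dotProduct, shiftM, Matrix.of_apply]
  have hterm : ∀ b, ((ind u a - ind v a) * chi G H v b + (ind u b - ind v b) * chi G H v a) * y b
      = (ind u a - ind v a) * (chi G H v b * y b)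
        + chi G H v a * (ind u b * y b) - chi G H v a * (ind v b * y b) := fun b => by ring
  rw [Finset.sum_congr rfl fun b _ => hterm b]
  rw [Finset.sum_sub_distrib, Finset.sum_add_distrib, ← Finset.mul_sum, ← Finset.mul_sum,
    ← Finset.mul_sum, sum_ind, sum_ind]
  ring

lemma shiftM_quad [Fintype V] (G : SimpleGraph V) (H : Set V) (u v : V) (y : V → ℝ) :
    y ⬝ᵥ (shiftM G H u v *ᵥ y)
      = 2 * (y u - y v) * (∑ z, chi G H v z * y z) := by
  classical
  simp only [dotProduct]
  rw [Finset.sum_congr rfl fun a _ => by rw [shiftM_mulVec]]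
  have hterm : ∀ a, y a * ((ind u a - ind v a) * (∑ z, chi G H v z * y z)
        + chi G H v a * (y u - y v))
      = (∑ z, chi G H v z * y z) * (ind u a * y a) - (∑ z, chi G H v z * y z) * (ind v a * y a)
        + (y u - y v) * (chi G H v a * y a) := fun a => by ring
  rw [Finset.sum_congr rfl fun a _ => hterm a]
  rw [Finset.sum_add_distrib, Finset.sum_sub_distrib, ← Finset.mul_sum, ← Finset.mul_sum,
    ← Finset.mul_sum, sum_ind, sum_ind]
  ring

end ShiftM

end Aux

open Matrix

/-- Shifting all the blocks attached at the cut vertex `v` of the block `H` to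
the cut vertex `u`, when `x_u ≥ x_v` for a Perron vector `x` of `G`, does not
decrease the spectral radius; the increase is strict whenever a Perron vector
of the new graph is not a Perron vector of `G`. -/
theorem specRad_le_shiftGraph {V : Type*} [Fintype V] (G : SimpleGraph V)
    (hG : G.Connected) (H : Set V) (hH : IsBlock G H)
    (u v : V) (huv : u ≠ v) (hu : u ∈ H) (hv : v ∈ H)
    (hcutu : IsCutVertex G u) (hcutv : IsCutVertex G v)
    (x : V → ℝ) (hx : IsPerron G x) (hxuv : x v ≤ x u) :
    specRad G ≤ specRad (shiftGraph G H u v) ∧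
      ((∃ y : V → ℝ, IsPerron (shiftGraph G H u v) y ∧ ¬ IsPerron G y) →
        specRad G < specRad (shiftGraph G H u v)) := by
  classical
  have hne : Nonempty V := hG.nonempty
  set G' := shiftGraph G H u v with hG'
  have key : ∀ z, z ∉ H → G.Adj v z → ¬ G.Adj u z :=
    fun z h1 h2 h3 => no_common_outside hH huv hu hv h1 h2 h3
  have hdec : adjMat G' = adjMat G + shiftM G H u v := adjMat_decomp huv hu hv key
  have hA : (adjMat G).IsHermitian := by
    rw [Matrix.IsHermitian]
    ext a b
    simp [adjMat, Matrix.conjTranspose_apply, G.adj_comm]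
  have hA' : (adjMat G').IsHermitian := by
    rw [Matrix.IsHermitian]
    ext a b
    simp [adjMat, Matrix.conjTranspose_apply, G'.adj_comm]
  have hρ : specRad G = matSup (adjMat G) := rfl
  have hρ' : specRad G' = matSup (adjMat G') := rfl
  obtain ⟨hxpos, hxeig⟩ := hx
  have hx0 : x ≠ 0 := fun h => (hxpos (Classical.arbitrary V)).ne' (congrFun h _)
  have hxx : 0 < x ⬝ᵥ x :=
    Finset.sum_pos (fun i _ => mul_pos (hxpos i) (hxpos i)) Finset.univ_nonempty
  set t := ∑ z, chi G H v z * x z with ht_def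
  have ht : 0 ≤ t :=
    Finset.sum_nonneg fun z _ => mul_nonneg (chi_nonneg G H v z) (hxpos z).le
  have hquad : x ⬝ᵥ (adjMat G' *ᵥ x) = x ⬝ᵥ (adjMat G *ᵥ x) + 2 * (x u - x v) * t := by
    rw [hdec, Matrix.add_mulVec, dotProduct_add, shiftM_quad]
  have hxAx : x ⬝ᵥ (adjMat G *ᵥ x) = specRad G * (x ⬝ᵥ x) := by
    rw [hxeig, dotProduct_smul, smul_eq_mul]
  have hray : x ⬝ᵥ (adjMat G' *ᵥ x) ≤ specRad G' * (x ⬝ᵥ x) := by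
    rw [hρ']; exact rayleigh_le_s14 hA' x
  have hgain : 0 ≤ 2 * (x u - x v) * t := by
    have := mul_nonneg (sub_nonneg.2 hxuv) ht
    nlinarith
  have hle : specRad G ≤ specRad G' := by
    have h1 : specRad G * (x ⬝ᵥ x) ≤ specRad G' * (x ⬝ᵥ x) := by
      rw [← hxAx] at *
      linarith [hquad, hray]
    exact le_of_mul_le_mul_right h1 hxx
  refine ⟨hle, ?_⟩
  rintro ⟨y, hy', hyn⟩
  rcases lt_or_eq_of_le hle with h | h
  · exact h
  exfalso
  -- equality of spectral radii
  have heq1 : x ⬝ᵥ (adjMat G' *ᵥ x) = specRad G' * (x ⬝ᵥ x) := by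
    apply le_antisymm hray
    rw [hquad, hxAx, h]
    linarith
  have hxeig' : adjMat G' *ᵥ x = specRad G' • x := by
    rw [hρ'] at heq1 ⊢
    exact rayleigh_eq hA' x heq1
  -- row v forces t = 0
  have hrow : (shiftM G H u v *ᵥ x) v = 0 := by
    have h1 : (adjMat G' *ᵥ x) v = (adjMat G *ᵥ x) v + (shiftM G H u v *ᵥ x) v := by
      rw [hdec, Matrix.add_mulVec]; rfl
    rw [hxeig', hxeig] at h1
    simp only [Pi.smul_apply, smul_eq_mul] at h1
    rw [h] at h1
    linarith
  have htz : t = 0 := by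
    have h2 := shiftM_mulVec G H u v x v
    rw [hrow, chi_v] at h2
    have hindu : ind u v = 0 := by simp [ind, huv.symm]
    have hindv : ind v v = 1 := by simp [ind]
    rw [hindu, hindv] at h2
    simp only [zero_sub, zero_mul, add_zero, neg_mul, one_mul] at h2
    linarith
  have hchi : ∀ z, chi G H v z = 0 := by
    have hall' : ∀ z ∈ Finset.univ, chi G H v z * x z = 0 :=
      (Finset.sum_eq_zero_iff_of_nonneg fun z _ =>
        mul_nonneg (chi_nonneg G H v z) (hxpos z).le).1 htz
    intro z
    rcases mul_eq_zero.1 (hall' z (Finset.mem_univ z)) with hz | hz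
    · exact hz
    · exact absurd hz (hxpos z).ne'
  have hM0 : shiftM G H u v = 0 := by
    ext a b
    simp [shiftM, hchi]
  have hAeq : adjMat G' = adjMat G := by rw [hdec, hM0, add_zero]
  have hspec : specRad G' = specRad G := by
    rw [hρ, hρ', hAeq]
  apply hyn
  obtain ⟨hypos, hyeig⟩ := hy'
  refine ⟨hypos, ?_⟩
  rw [← hAeq, ← hspec]
  exact hyeig

end SpectralBlock
end
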